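/- arXiv:1005.1721 — 6 statements merged into one kernel-verified Lean document; each statement's English description precedes it below -/
import Mathlib

section
/- Every connected graph that admits an isometric embedding into the Cartesian product of two trees is a median graph. -/
open SimpleGraph

/-- The metric interval between `u` and `v` in a graph `G`. -/
def gInterval {V : Type} (G : SimpleGraph V) (u v : V) : Set V :=
  {z | G.dist u z + G.dist z v = G.dist u v}

/-- `G` is a median graph: it is connected and every triple of vertices has a
unique median. -/
def IsMedianGraph {V : Type} (G : SimpleGraph V) : Prop :=
  G.Connected ∧ ∀ u v w : V,
    ∃! m : V, m ∈ gInterval G u v ∧ m ∈ gInterval G v w ∧ m ∈ gInterval G u w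

/-- `f` is an isometric embedding of the graph `H` into the graph `G`. -/
def IsIsometricEmbedding {A B : Type} (H : SimpleGraph A) (G : SimpleGraph B)
    (f : A → B) : Prop :=
  ∀ x y : A, G.dist (f x) (f y) = H.dist x y

/-- `G` admits an isometric embedding into the Cartesian product of two trees. -/
def EmbedsInTwoTrees {V : Type} (G : SimpleGraph V) : Prop :=
  ∃ (A B : Type) (T₁ : SimpleGraph A) (T₂ : SimpleGraph B),
    T₁.IsTree ∧ T₂.IsTree ∧ ∃ f : V → A × B, IsIsometricEmbedding G (T₁ □ T₂) f

/-!
In a tree every interval `I(x, y)` is a path, which gives unique medians; hence `T₁ □ T₂` is a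
median graph, the median of a triple being the pair of the medians in the two factors. So it
suffices that the median `m` of `f u, f v, f w` lies in the image of the isometric embedding `f`:
its preimage is then a median in `G`, unique since `f` is injective. For this we move `u` towards
`m` through vertices of `G`, which keeps `m` the median of the triple, and induct on the distance
`dist (f u) m`. If `f u` differs from `m` in both coordinates, the first vertex of a geodesic from
`u` to `v` already lies between `f u` and `m`. If, say, `(f u).1 = m.1`, let `β` be the first step
from `(f u).2` towards `m.2`. Geodesics from `u` to `v` and from `u` to `w` first move in the second
coordinate onto vertices `p`, `q` with `(f p).2 = (f q).2 = β`, and `(f u).1` lies between `(f p).1`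
and `(f q).1`, so a geodesic from `p` to `q` passes through a preimage of `((f u).1, β)`.
-/

namespace SimpleGraph

def IsMedian {V : Type} (G : SimpleGraph V) (x y z m : V) : Prop :=
  m ∈ gInterval G x y ∧ m ∈ gInterval G y z ∧ m ∈ gInterval G x z

section Interval

variable {V : Type} {G : SimpleGraph V} {x y z a b c m : V}

theorem mem_gInterval : z ∈ gInterval G x y ↔ G.dist x z + G.dist z y = G.dist x y :=
  Iff.rfl

@[simp]
theorem left_mem_gInterval : x ∈ gInterval G x y := by
  rw [mem_gInterval, dist_self, zero_add]

@[simp]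
theorem right_mem_gInterval : y ∈ gInterval G x y := by
  rw [mem_gInterval, dist_self, add_zero]

theorem mem_gInterval_comm : z ∈ gInterval G x y ↔ z ∈ gInterval G y x := by
  have := G.dist_comm (u := x) (v := y)
  have := G.dist_comm (u := x) (v := z)
  have := G.dist_comm (u := z) (v := y)
  rw [mem_gInterval, mem_gInterval]
  omega

theorem Connected.eq_of_mem_gInterval_self (hG : G.Connected) (h : z ∈ gInterval G x x) :
    z = x :=
  hG.dist_eq_zero_iff.1 (by rw [mem_gInterval, dist_self] at h; omega) |>.symm

theorem Connected.gInterval_subset_left (hG : G.Connected) (hc : c ∈ gInterval G x y) :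
    gInterval G x c ⊆ gInterval G x y := fun b hb => by
  have : G.dist b y ≤ G.dist b c + G.dist c y := hG.dist_triangle
  have : G.dist x y ≤ G.dist x b + G.dist b y := hG.dist_triangle
  rw [mem_gInterval] at *
  omega

theorem Connected.gInterval_subset_right (hG : G.Connected) (hb : b ∈ gInterval G x y) :
    gInterval G b y ⊆ gInterval G x y := fun c hc => by
  rw [mem_gInterval_comm] at hb ⊢
  exact hG.gInterval_subset_left hb (mem_gInterval_comm.1 hc)

theorem Connected.mem_gInterval_of_mem_left (hG : G.Connected) (hb : b ∈ gInterval G x c)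
    (hc : c ∈ gInterval G x y) : c ∈ gInterval G b y := by
  have : G.dist b y ≤ G.dist b c + G.dist c y := hG.dist_triangle
  have : G.dist x y ≤ G.dist x b + G.dist b y := hG.dist_triangle
  rw [mem_gInterval] at *
  omega

theorem Connected.mem_gInterval_of_mem_of_mem (hG : G.Connected) (hx : x ∈ gInterval G y z)
    (ha : a ∈ gInterval G x y) (hb : b ∈ gInterval G x z) : x ∈ gInterval G a b := by
  have : G.dist y z ≤ G.dist y a + G.dist a z := hG.dist_triangle
  have : G.dist a z ≤ G.dist a x + G.dist x z := hG.dist_triangle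
  have : G.dist a b ≤ G.dist a x + G.dist x b := hG.dist_triangle
  have : G.dist a z ≤ G.dist a b + G.dist b z := hG.dist_triangle
  have := G.dist_comm (u := y) (v := a)
  have := G.dist_comm (u := y) (v := x)
  have := G.dist_comm (u := a) (v := x)
  rw [mem_gInterval] at *
  omega

theorem Connected.exists_adj_mem_gInterval (hG : G.Connected) (hxy : x ≠ y) :
    ∃ a, G.Adj x a ∧ a ∈ gInterval G x y := by
  obtain ⟨p, hp⟩ := hG.exists_walk_length_eq_dist x y
  cases p with
  | nil => exact absurd rfl hxy
  | @cons _ a _ hadj q =>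
    refine ⟨a, hadj, ?_⟩
    have : G.dist x y ≤ G.dist x a + G.dist a y := hG.dist_triangle
    have := dist_le q
    have := dist_eq_one_iff_adj.2 hadj
    rw [Walk.length_cons] at hp
    rw [mem_gInterval]
    omega

theorem Connected.exists_mem_gInterval_eq (hG : G.Connected) (φ : V → ℕ)
    (hφ : ∀ a b, G.Adj a b → φ b ≤ φ a + 1) {k : ℕ} (hx : φ x ≤ k) (hy : k ≤ φ y) :
    ∃ z ∈ gInterval G x y, φ z = k := by
  induction hn : G.dist x y using Nat.strong_induction_on generalizing x with
  | _ n ih =>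
    rcases hx.eq_or_lt with hk | hk
    · exact ⟨x, left_mem_gInterval, hk⟩
    have hxy : x ≠ y := by rintro rfl; omega
    obtain ⟨a, hadj, ha⟩ := hG.exists_adj_mem_gInterval hxy
    have hxa := dist_eq_one_iff_adj.2 hadj
    rw [mem_gInterval] at ha
    obtain ⟨z, hz, rfl⟩ := ih (G.dist a y) (by omega) (x := a) (by have := hφ _ _ hadj; omega) rfl
    exact ⟨z, hG.gInterval_subset_right ha hz, rfl⟩

theorem Connected.dist_le_dist_add_one (hG : G.Connected) (hab : G.dist a b ≤ 1) (c : V) :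
    G.dist c b ≤ G.dist c a + 1 :=
  hG.dist_triangle.trans (Nat.add_le_add_left hab _)

theorem IsMedian.of_mem_gInterval {x' : V} (hm : G.IsMedian x y z m) (hG : G.Connected)
    (hx' : x' ∈ gInterval G x m) : G.IsMedian x' y z m :=
  ⟨hG.mem_gInterval_of_mem_left hx' hm.1, hm.2.1, hG.mem_gInterval_of_mem_left hx' hm.2.2⟩

end Interval

section Tree

variable {A : Type} {T : SimpleGraph A} {x y z a b m : A}

theorem IsTree.eq_of_mem_gInterval_of_dist_eq (hT : T.IsTree) (ha : a ∈ gInterval T x y)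
    (hb : b ∈ gInterval T x y) (h : T.dist x a = T.dist x b) : a = b := by
  have path_through : ∀ c ∈ gInterval T x y,
      ∃ p : T.Walk x y, p.IsPath ∧ p.getVert (T.dist x c) = c := by
    intro c hc
    obtain ⟨p₁, hp₁⟩ := hT.connected.exists_walk_length_eq_dist x c
    obtain ⟨p₂, hp₂⟩ := hT.connected.exists_walk_length_eq_dist c y
    refine ⟨p₁.append p₂, Walk.isPath_of_length_eq_dist _ ?_, ?_⟩
    · rw [Walk.length_append, hp₁, hp₂]; exact hc
    · simp [← hp₁, Walk.getVert_append]
  obtain ⟨p, hp, hpa⟩ := path_through a ha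
  obtain ⟨q, hq, hqb⟩ := path_through b hb
  rw [← hpa, ← hqb, h, (hT.existsUnique_path x y).unique hp hq]

theorem IsTree.mem_gInterval_of_dist_le (hT : T.IsTree) (ha : a ∈ gInterval T x y)
    (hm : m ∈ gInterval T x y) (h : T.dist x a ≤ T.dist x m) : a ∈ gInterval T x m := by
  obtain ⟨a', ha', hdist⟩ := hT.connected.exists_mem_gInterval_eq (T.dist x)
    (fun _ _ hadj => hT.connected.dist_le_dist_add_one (dist_eq_one_iff_adj.2 hadj).le x)
    (x := x) (y := m) (k := T.dist x a) (by simp) h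
  rwa [← hT.eq_of_mem_gInterval_of_dist_eq (hT.connected.gInterval_subset_left hm ha') ha hdist]

theorem IsTree.mem_gInterval_of_adj (hT : T.IsTree) (ha : a ∈ gInterval T x y)
    (hm : m ∈ gInterval T x y) (hadj : T.Adj x a) (hxm : x ≠ m) : a ∈ gInterval T x m :=
  hT.mem_gInterval_of_dist_le ha hm <| by
    rw [dist_eq_one_iff_adj.2 hadj]; exact hT.connected.pos_dist_of_ne hxm

theorem IsTree.exists_isMedian (hT : T.IsTree) (x y z : A) : ∃ m, T.IsMedian x y z m := by
  have hc := hT.connected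
  induction hn : T.dist y z using Nat.strong_induction_on generalizing y with
  | _ n ih =>
    by_cases hyz : y = z
    · subst hyz
      exact ⟨y, right_mem_gInterval, left_mem_gInterval, right_mem_gInterval⟩
    obtain ⟨y', hadj, hy'⟩ := hc.exists_adj_mem_gInterval hyz
    have hyy' := dist_eq_one_iff_adj.2 hadj
    have hy'y := dist_eq_one_iff_adj.2 hadj.symm
    obtain ⟨m', hm'y', hm'z, hm'⟩ :=
      ih (T.dist y' z) (by rw [mem_gInterval] at hy'; omega) (y := y') rfl
    rcases hT.dist_eq_dist_add_one_of_adj x hadj with hcloser | hfarther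
    · have : y' ∈ gInterval T x y := by
        rw [mem_gInterval, hy'y, hcloser]
      exact ⟨m', hc.gInterval_subset_left this hm'y', hc.gInterval_subset_right hy' hm'z, hm'⟩
    refine ⟨y, right_mem_gInterval, left_mem_gInterval, ?_⟩
    by_cases hm'_eq : m' = y'
    · subst hm'_eq
      rw [mem_gInterval] at hm' hy' ⊢
      omega
    -- Otherwise `y` is the first step from `y'` towards `x`, hence towards `m'` and `z`,
    -- while `y'` lies between `y` and `z`.
    exfalso
    have hy : y ∈ gInterval T y' x := by
      have := T.dist_comm (u := x) (v := y)
      have := T.dist_comm (u := x) (v := y')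
      rw [mem_gInterval]
      omega
    have hyz' : y ∈ gInterval T y' z := hc.gInterval_subset_left hm'z <|
      hT.mem_gInterval_of_adj hy (mem_gInterval_comm.1 hm'y') hadj.symm (Ne.symm hm'_eq)
    rw [mem_gInterval, hy'y] at hyz'
    rw [mem_gInterval, hyy'] at hy'
    omega

theorem IsTree.eq_of_isMedian (hT : T.IsTree) {m' : A} (hm : T.IsMedian x y z m)
    (hm' : T.IsMedian x y z m') : m = m' := by
  obtain ⟨h₁, h₂, h₃⟩ := hm
  obtain ⟨h₁', h₂', h₃'⟩ := hm'
  refine hT.eq_of_mem_gInterval_of_dist_eq h₁ h₁' ?_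
  have := T.dist_comm (u := m) (v := y)
  have := T.dist_comm (u := m') (v := y)
  rw [mem_gInterval] at *
  omega

end Tree

section BoxProd

variable {A B : Type} {T₁ : SimpleGraph A} {T₂ : SimpleGraph B}

theorem dist_boxProd (h₁ : T₁.Connected) (h₂ : T₂.Connected) (x y : A × B) :
    (T₁ □ T₂).dist x y = T₁.dist x.1 y.1 + T₂.dist x.2 y.2 := by
  have h := edist_boxProd (G := T₁) (H := T₂) x y
  rw [← (h₁.preconnected x.1 y.1).coe_dist_eq_edist, ← (h₂.preconnected x.2 y.2).coe_dist_eq_edist,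
    ← ((h₁.boxProd h₂).preconnected x y).coe_dist_eq_edist] at h
  exact_mod_cast h

theorem mem_gInterval_boxProd (h₁ : T₁.Connected) (h₂ : T₂.Connected) {x y z : A × B} :
    z ∈ gInterval (T₁ □ T₂) x y ↔ z.1 ∈ gInterval T₁ x.1 y.1 ∧ z.2 ∈ gInterval T₂ x.2 y.2 := by
  have : T₁.dist x.1 y.1 ≤ T₁.dist x.1 z.1 + T₁.dist z.1 y.1 := h₁.dist_triangle
  have : T₂.dist x.2 y.2 ≤ T₂.dist x.2 z.2 + T₂.dist z.2 y.2 := h₂.dist_triangle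
  simp only [mem_gInterval, dist_boxProd h₁ h₂]
  omega

theorem swap_mem_gInterval_boxProd (h₁ : T₁.Connected) (h₂ : T₂.Connected) {x y z : A × B} :
    z.swap ∈ gInterval (T₂ □ T₁) x.swap y.swap ↔ z ∈ gInterval (T₁ □ T₂) x y := by
  rw [mem_gInterval_boxProd h₂ h₁, mem_gInterval_boxProd h₁ h₂]
  exact and_comm

theorem isMedian_boxProd (h₁ : T₁.Connected) (h₂ : T₂.Connected) {x y z m : A × B} :
    (T₁ □ T₂).IsMedian x y z m ↔ T₁.IsMedian x.1 y.1 z.1 m.1 ∧ T₂.IsMedian x.2 y.2 z.2 m.2 := by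
  simp only [IsMedian, mem_gInterval_boxProd h₁ h₂]
  tauto

theorem IsTree.isMedianGraph_boxProd (h₁ : T₁.IsTree) (h₂ : T₂.IsTree) :
    IsMedianGraph (T₁ □ T₂) := by
  have hc₁ := h₁.connected
  have hc₂ := h₂.connected
  refine ⟨hc₁.boxProd hc₂, fun x y z => ?_⟩
  obtain ⟨m₁, hm₁⟩ := h₁.exists_isMedian x.1 y.1 z.1
  obtain ⟨m₂, hm₂⟩ := h₂.exists_isMedian x.2 y.2 z.2
  refine ⟨(m₁, m₂), (isMedian_boxProd hc₁ hc₂).2 ⟨hm₁, hm₂⟩, fun m hm => ?_⟩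
  obtain ⟨hm₁', hm₂'⟩ := (isMedian_boxProd hc₁ hc₂).1 hm
  exact Prod.ext (h₁.eq_of_isMedian hm₁' hm₁) (h₂.eq_of_isMedian hm₂' hm₂)

end BoxProd

end SimpleGraph

section IsometricEmbedding

variable {V W : Type} {G : SimpleGraph V} {H : SimpleGraph W} {f : V → W} {x y z m a b : V}

theorem IsIsometricEmbedding.mem_gInterval_iff (hf : IsIsometricEmbedding G H f) :
    f z ∈ gInterval H (f x) (f y) ↔ z ∈ gInterval G x y := by
  rw [mem_gInterval, mem_gInterval, hf, hf, hf]

theorem IsIsometricEmbedding.isMedian_iff (hf : IsIsometricEmbedding G H f) :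
    H.IsMedian (f x) (f y) (f z) (f m) ↔ G.IsMedian x y z m := by
  simp only [IsMedian, hf.mem_gInterval_iff]

theorem IsIsometricEmbedding.adj (hf : IsIsometricEmbedding G H f) (hab : G.Adj a b) :
    H.Adj (f a) (f b) := by
  rw [← dist_eq_one_iff_adj, hf, dist_eq_one_iff_adj]
  exact hab

theorem IsIsometricEmbedding.injective (hG : G.Connected) (hf : IsIsometricEmbedding G H f) :
    Function.Injective f := fun a b hab =>
  hG.dist_eq_zero_iff.1 (by rw [← hf, hab, dist_self])

end IsometricEmbedding

section TwoTrees

variable {V A B : Type} {G : SimpleGraph V} {T₁ : SimpleGraph A} {T₂ : SimpleGraph B}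
  {f : V → A × B} {u v w : V} {m : A × B}

theorem IsIsometricEmbedding.swap (h₁ : T₁.Connected) (h₂ : T₂.Connected)
    (hf : IsIsometricEmbedding G (T₁ □ T₂) f) :
    IsIsometricEmbedding G (T₂ □ T₁) (Prod.swap ∘ f) := fun x y => by
  rw [← hf, dist_boxProd h₂ h₁, dist_boxProd h₁ h₂, add_comm]
  rfl

theorem IsIsometricEmbedding.dist_le_one_of_adj (h₁ : T₁.Connected) (h₂ : T₂.Connected)
    (hf : IsIsometricEmbedding G (T₁ □ T₂) f) {a b : V} (hab : G.Adj a b) :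
    T₁.dist (f a).1 (f b).1 ≤ 1 ∧ T₂.dist (f a).2 (f b).2 ≤ 1 := by
  have := hf a b
  rw [dist_boxProd h₁ h₂, dist_eq_one_iff_adj.2 hab] at this
  omega

theorem exists_step_of_fst_ne_of_snd_ne (hG : G.Connected) (h₁ : T₁.IsTree) (h₂ : T₂.IsTree)
    (hf : IsIsometricEmbedding G (T₁ □ T₂) f) (hm : m ∈ gInterval (T₁ □ T₂) (f u) (f v))
    (hfst : (f u).1 ≠ m.1) (hsnd : (f u).2 ≠ m.2) :
    ∃ r, f r ∈ gInterval (T₁ □ T₂) (f u) m ∧ f r ≠ f u := by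
  have hc₁ := h₁.connected
  have hc₂ := h₂.connected
  have huv : u ≠ v := by
    rintro rfl
    exact hfst (congrArg Prod.fst ((hc₁.boxProd hc₂).eq_of_mem_gInterval_self hm).symm)
  obtain ⟨a, hadj, ha⟩ := hG.exists_adj_mem_gInterval huv
  have hfa := hf.adj hadj
  refine ⟨a, ?_, hfa.ne.symm⟩
  rw [← hf.mem_gInterval_iff, mem_gInterval_boxProd hc₁ hc₂] at ha
  rw [mem_gInterval_boxProd hc₁ hc₂] at hm ⊢
  rcases boxProd_adj.1 hfa with ⟨had, heq⟩ | ⟨had, heq⟩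
  · exact ⟨h₁.mem_gInterval_of_adj ha.1 hm.1 had hfst, heq ▸ left_mem_gInterval⟩
  · exact ⟨heq ▸ left_mem_gInterval, h₂.mem_gInterval_of_adj ha.2 hm.2 had hsnd⟩

theorem exists_step_of_fst_eq (hG : G.Connected) (h₁ : T₁.IsTree) (h₂ : T₂.IsTree)
    (hf : IsIsometricEmbedding G (T₁ □ T₂) f) (hm : (T₁ □ T₂).IsMedian (f u) (f v) (f w) m)
    (hfst : (f u).1 = m.1) (hsnd : (f u).2 ≠ m.2) :
    ∃ r, f r ∈ gInterval (T₁ □ T₂) (f u) m ∧ f r ≠ f u := by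
  have hc₁ := h₁.connected
  have hc₂ := h₂.connected
  have coords : ∀ {x y z}, z ∈ gInterval G x y →
      (f z).1 ∈ gInterval T₁ (f x).1 (f y).1 ∧ (f z).2 ∈ gInterval T₂ (f x).2 (f y).2 :=
    fun h => (mem_gInterval_boxProd hc₁ hc₂).1 (hf.mem_gInterval_iff.2 h)
  obtain ⟨β, hβ, hβm⟩ := hc₂.exists_adj_mem_gInterval hsnd
  have first_move : ∀ {y}, m ∈ gInterval (T₁ □ T₂) (f u) (f y) →
      ∃ p ∈ gInterval G u y, (f p).2 = β := by
    intro y hy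
    have hy₂ := ((mem_gInterval_boxProd hc₁ hc₂).1 hy).2
    obtain ⟨p, hp, hp₁⟩ := hG.exists_mem_gInterval_eq (fun z => T₂.dist (f u).2 (f z).2)
      (fun _ _ hab => hc₂.dist_le_dist_add_one (hf.dist_le_one_of_adj hc₁ hc₂ hab).2 _)
      (x := u) (y := y) (k := 1) (by simp) <| by
        have := hc₂.pos_dist_of_ne hsnd
        rw [mem_gInterval] at hy₂
        omega
    refine ⟨p, hp, h₂.eq_of_mem_gInterval_of_dist_eq
      (h₂.mem_gInterval_of_adj (coords hp).2 hy₂ (dist_eq_one_iff_adj.1 hp₁) hsnd) hβm ?_⟩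
    rw [hp₁, dist_eq_one_iff_adj.2 hβ]
  obtain ⟨p, hp, hpβ⟩ := first_move hm.1
  obtain ⟨q, hq, hqβ⟩ := first_move hm.2.2
  have hu : (f u).1 ∈ gInterval T₁ (f p).1 (f q).1 :=
    hc₁.mem_gInterval_of_mem_of_mem (hfst ▸ ((mem_gInterval_boxProd hc₁ hc₂).1 hm.2.1).1)
      (coords hp).1 (coords hq).1
  obtain ⟨r, hr, hr₁⟩ := hG.exists_mem_gInterval_eq (fun z => T₁.dist (f p).1 (f z).1)
    (fun _ _ hab => hc₁.dist_le_dist_add_one (hf.dist_le_one_of_adj hc₁ hc₂ hab).1 _)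
    (x := p) (y := q) (k := T₁.dist (f p).1 (f u).1) (by simp) <| by
      rw [mem_gInterval] at hu
      omega
  have hfr : f r = ((f u).1, β) := by
    obtain ⟨hr₁', hr₂'⟩ := coords hr
    rw [hpβ, hqβ] at hr₂'
    exact Prod.ext (h₁.eq_of_mem_gInterval_of_dist_eq hr₁' hu hr₁)
      (hc₂.eq_of_mem_gInterval_self hr₂')
  refine ⟨r, ?_, ?_⟩
  · rw [hfr, mem_gInterval_boxProd hc₁ hc₂]
    exact ⟨hfst ▸ left_mem_gInterval, hβm⟩
  · rw [hfr]
    exact fun h => hβ.ne (congrArg Prod.snd h).symm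

theorem exists_step_towards_isMedian (hG : G.Connected) (h₁ : T₁.IsTree) (h₂ : T₂.IsTree)
    (hf : IsIsometricEmbedding G (T₁ □ T₂) f) (hm : (T₁ □ T₂).IsMedian (f u) (f v) (f w) m)
    (hne : f u ≠ m) : ∃ r, f r ∈ gInterval (T₁ □ T₂) (f u) m ∧ f r ≠ f u := by
  have hc₁ := h₁.connected
  have hc₂ := h₂.connected
  by_cases hfst : (f u).1 = m.1
  · exact exists_step_of_fst_eq hG h₁ h₂ hf hm hfst fun hsnd => hne (Prod.ext hfst hsnd)
  by_cases hsnd : (f u).2 = m.2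
  · have hm' : (T₂ □ T₁).IsMedian ((Prod.swap ∘ f) u) ((Prod.swap ∘ f) v) ((Prod.swap ∘ f) w)
        m.swap := by
      simpa only [IsMedian, Function.comp_apply, swap_mem_gInterval_boxProd hc₁ hc₂] using hm
    obtain ⟨r, hr, hne'⟩ := exists_step_of_fst_eq hG h₂ h₁ (hf.swap hc₁ hc₂) hm' hsnd hfst
    exact ⟨r, (swap_mem_gInterval_boxProd hc₁ hc₂).1 hr, fun h => hne' (by simp [h])⟩
  · exact exists_step_of_fst_ne_of_snd_ne hG h₁ h₂ hf hm.1 hfst hsnd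

theorem exists_eq_of_isMedian (hG : G.Connected) (h₁ : T₁.IsTree) (h₂ : T₂.IsTree)
    (hf : IsIsometricEmbedding G (T₁ □ T₂) f) (hm : (T₁ □ T₂).IsMedian (f u) (f v) (f w) m) :
    ∃ t, f t = m := by
  have hc := h₁.connected.boxProd h₂.connected
  induction hn : (T₁ □ T₂).dist (f u) m using Nat.strong_induction_on generalizing u with
  | _ n ih =>
    by_cases hu : f u = m
    · exact ⟨u, hu⟩
    obtain ⟨r, hr, hne⟩ := exists_step_towards_isMedian hG h₁ h₂ hf hm hu
    have := hc.pos_dist_of_ne hne.symm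
    exact ih _ (by rw [mem_gInterval] at hr; omega) (hm.of_mem_gInterval hc hr) rfl

end TwoTrees

/-- Every connected graph that admits an isometric embedding into the Cartesian
product of two trees is a median graph. -/
theorem partialDoubleTree_isMedian {V : Type} (G : SimpleGraph V)
    (hG : G.Connected) (h : EmbedsInTwoTrees G) : IsMedianGraph G := by
  obtain ⟨A, B, T₁, T₂, h₁, h₂, f, hf⟩ := h
  refine ⟨hG, fun u v w => ?_⟩
  obtain ⟨m, hm, hm_unique⟩ := (h₁.isMedianGraph_boxProd h₂).2 (f u) (f v) (f w)
  obtain ⟨t, rfl⟩ := exists_eq_of_isMedian hG h₁ h₂ hf hm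
  exact ⟨t, hf.isMedian_iff.1 hm,
    fun t' ht' => hf.injective hG (hm_unique _ (hf.isMedian_iff.2 ht'))⟩
end

section
/- Let G be a median graph whose edges are colored in such a way that any two opposite edges of every 4-cycle of G receive the same color. Then G contains a monochromatic cycle if and only if G contains a monochromatic 4-cycle. -/
open SimpleGraph

/-- A cycle (given as a closed walk which is a cycle) is monochromatic for an
edge coloring `c` if all of its edges receive the same color. -/
def MonochromaticCycle {V C : Type} {G : SimpleGraph V} (c : Sym2 V → C)
    {v : V} (w : G.Walk v v) : Prop :=
  ∃ k : C, ∀ e ∈ w.edges, c e = k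

/-!
Median graphs are bipartite, so a shortest monochromatic cycle `W` has length `4` unless it is
longer than `5`. In that case fix a vertex `z` of `W`, let `v` be a vertex of `W` farthest from
`z` and `u`, `w` its neighbours on `W`. By the quadrangle condition `u` and `w` have a common
neighbour `m` with `d(z, m) = d(z, v) - 2`, and the square `v w m u` gives `wm` and `mu` the colour
of `W`. If `m` lies on `W`, one of the arcs of `W` from `m` to `u` or `w`, closed up by the edge
back to `m`, is a shorter monochromatic cycle. Otherwise replacing `v` by `m` gives a monochromatic
cycle of the same length through `z` with smaller total distance to `z`; choosing `W` to minimise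
this total among the shortest monochromatic cycles through `z` rules out both alternatives.
-/

namespace SimpleGraph.Walk

variable {V : Type*} {G : SimpleGraph V}

theorem IsPath.cons_isCycle_of_two_le_length {u v : V} {p : G.Walk v u} (hp : p.IsPath)
    (h : G.Adj u v) (hlen : 2 ≤ p.length) : (cons h p).IsCycle :=
  (cons_isCycle_iff p h).mpr
    ⟨hp, fun he ↦ by have := hp.length_eq_one_of_mem_edges (Sym2.eq_swap ▸ he); omega⟩

theorem isCycle_cons_concat_iff {u v w : V} (hvw : G.Adj v w) (huv : G.Adj u v)
    (p : G.Walk w u) :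
    (cons hvw (p.concat huv)).IsCycle ↔ p.IsPath ∧ v ∉ p.support ∧ w ≠ u := by
  rw [cons_isCycle_iff, concat_isPath_iff, edges_concat, List.concat_eq_append, List.mem_append,
    List.mem_singleton, Sym2.eq_iff]
  have : s(v, w) ∈ p.edges → v ∈ p.support := p.fst_mem_support_of_mem_edges
  grind

theorem exists_eq_cons_concat {u v : V} (p : G.Walk u v) (hp : 2 ≤ p.length) :
    ∃ (x y : V) (hux : G.Adj u x) (hyv : G.Adj y v) (q : G.Walk x y),
      p = cons hux (q.concat hyv) := by
  cases p with
  | nil => simp at hp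
  | cons h q =>
    have hq : ¬ q.Nil := by rw [← length_eq_zero_iff]; simp at hp; omega
    exact ⟨_, _, h, q.adj_penultimate hq, q.dropLast, by rw [concat_dropLast]⟩

theorem exists_isCycle_of_adj_of_mem_support [DecidableEq V] {u w m : V} {p : G.Walk w u}
    (hp : p.IsPath) (hm : m ∈ p.support) (hmw : G.Adj m w) (hmu : G.Adj m u)
    (hlen : 3 ≤ p.length) :
    ∃ q : G.Walk m m, q.IsCycle ∧ q.length ≤ p.length ∧
      q.edges ⊆ s(m, w) :: s(m, u) :: p.edges := by
  have hsplit : (p.takeUntil m hm).length + (p.dropUntil m hm).length = p.length := by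
    rw [← length_append, take_spec]
  have h₁ : (p.takeUntil m hm).length ≠ 0 := fun h ↦ hmw.ne (eq_of_length_eq_zero h).symm
  have h₂ : (p.dropUntil m hm).length ≠ 0 := fun h ↦ hmu.ne (eq_of_length_eq_zero h)
  by_cases h : 2 ≤ (p.takeUntil m hm).length
  · refine ⟨cons hmw (p.takeUntil m hm), (hp.takeUntil hm).cons_isCycle_of_two_le_length hmw h,
      by simp; omega, ?_⟩
    simp only [edges_cons]
    exact List.cons_subset_cons _
      (List.Subset.trans (p.edges_takeUntil_subset_edges hm) (List.subset_cons_self _ _))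
  · refine ⟨cons hmu (p.dropUntil m hm).reverse,
      (hp.dropUntil hm).reverse.cons_isCycle_of_two_le_length hmu (by simp; omega),
      by simp; omega, ?_⟩
    simp only [edges_cons, edges_reverse]
    exact List.Subset.trans (List.cons_subset_cons _ fun e he ↦
      p.edges_dropUntil_subset_edges hm (List.mem_reverse.mp he)) (List.subset_cons_self _ _)

-- `p.support.tail` lists each vertex of a cycle `p` exactly once.
noncomputable def sumDist (z : V) {a : V} (p : G.Walk a a) : ℕ :=
  (p.support.tail.map (G.dist z)).sum

theorem sumDist_rotate [DecidableEq V] (z : V) {a v : V} (p : G.Walk a a)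
    (hv : v ∈ p.support) :
    (p.rotate v hv).sumDist z = p.sumDist z :=
  ((p.support_rotate v hv).perm.map _).sum_eq

theorem sumDist_cons_concat (z : V) {u v w : V} (hvw : G.Adj v w) (huv : G.Adj u v)
    (p : G.Walk w u) :
    (cons hvw (p.concat huv)).sumDist z = (p.support.map (G.dist z)).sum + G.dist z v := by
  simp [sumDist, support_concat]

end SimpleGraph.Walk

def OppositeEdgesSameColor {V C : Type} (G : SimpleGraph V) (c : Sym2 V → C) : Prop :=
  ∀ x1 x2 x3 x4 : V, G.Adj x1 x2 → G.Adj x2 x3 → G.Adj x3 x4 → G.Adj x4 x1 → x1 ≠ x3 →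
    x2 ≠ x4 → c s(x1, x2) = c s(x3, x4)

namespace IsMedianGraph

open Walk

variable {V C : Type} {G : SimpleGraph V} {c : Sym2 V → C}

theorem dist_eq_dist_add_one_of_adj (hG : IsMedianGraph G) (z : V) {a b : V}
    (hab : G.Adj a b) : G.dist z a = G.dist z b + 1 ∨ G.dist z b = G.dist z a + 1 := by
  obtain ⟨m, ⟨h₁, h₂, h₃⟩, -⟩ := hG.2 a b z
  simp only [gInterval, Set.mem_ofPred_eq, dist_eq_one_iff_adj.mpr hab] at h₁ h₂ h₃
  rw [G.dist_comm (u := b) (v := z), G.dist_comm (u := a) (v := z)] at *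
  rcases (by omega : G.dist a m = 0 ∨ G.dist m b = 0) with h | h
  · obtain rfl := hG.1.dist_eq_zero_iff.mp h
    rw [G.dist_comm, dist_eq_one_iff_adj.mpr hab] at h₂
    omega
  · obtain rfl := hG.1.dist_eq_zero_iff.mp h
    omega

theorem even_length (hG : IsMedianGraph G) {u : V} (p : G.Walk u u) : Even p.length :=
  ((Coloring.mk (fun v ↦ decide (Even (G.dist u v))) fun hab ↦ by
    rcases hG.dist_eq_dist_add_one_of_adj u hab with h | h <;>
      simp [h, Nat.even_add_one, -Nat.not_even_iff_odd]
    ).even_length_iff_congr p).mpr Iff.rfl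

theorem quadrangle_condition (hG : IsMedianGraph G) {z u v w : V} (huv : G.Adj u v)
    (hvw : G.Adj v w) (huw : u ≠ w) (hu : G.dist z u + 1 = G.dist z v)
    (hw : G.dist z w + 1 = G.dist z v) :
    ∃ m, G.Adj u m ∧ G.Adj m w ∧ G.dist z m + 1 = G.dist z u := by
  have hdist : G.dist u w = 2 := by
    have hle : G.dist u w ≤ 2 := by
      simpa [dist_eq_one_iff_adj.mpr huv, dist_eq_one_iff_adj.mpr hvw] using
        hG.1.dist_triangle (u := u) (v := v) (w := w)
    have hne₀ : G.dist u w ≠ 0 := fun h ↦ huw (hG.1.dist_eq_zero_iff.mp h)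
    have hne₁ : G.dist u w ≠ 1 := fun h ↦ by
      rcases hG.dist_eq_dist_add_one_of_adj z (dist_eq_one_iff_adj.mp h) with h' | h' <;> omega
    omega
  obtain ⟨m, ⟨h₁, h₂, h₃⟩, -⟩ := hG.2 u w z
  simp only [gInterval, Set.mem_ofPred_eq, hdist] at h₁ h₂ h₃
  rw [G.dist_comm (u := u) (v := z), G.dist_comm (u := w) (v := z),
    G.dist_comm (u := m) (v := z)] at *
  have hm_ne_u : G.dist u m ≠ 0 := fun h ↦ by
    obtain rfl := hG.1.dist_eq_zero_iff.mp h
    rw [G.dist_comm, hdist] at h₂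
    omega
  have hm_ne_w : G.dist m w ≠ 0 := fun h ↦ by
    obtain rfl := hG.1.dist_eq_zero_iff.mp h
    omega
  exact ⟨m, dist_eq_one_iff_adj.mp (by omega), dist_eq_one_iff_adj.mp (by omega), by omega⟩

theorem exists_square_closer (hG : IsMedianGraph G) (hc : OppositeEdgesSameColor G c) {k : C}
    {z u v w : V} (hvw : G.Adj v w) (huv : G.Adj u v) (hwu : w ≠ u)
    (hw : G.dist z w ≤ G.dist z v) (hu : G.dist z u ≤ G.dist z v)
    (hcvw : c s(v, w) = k) (hcuv : c s(u, v) = k) :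
    ∃ m, G.Adj m w ∧ G.Adj u m ∧ G.dist z m + 2 = G.dist z v ∧
      c s(m, w) = k ∧ c s(u, m) = k := by
  have hdw : G.dist z w + 1 = G.dist z v := by
    rcases hG.dist_eq_dist_add_one_of_adj z hvw with h | h <;> omega
  have hdu : G.dist z u + 1 = G.dist z v := by
    rcases hG.dist_eq_dist_add_one_of_adj z huv with h | h <;> omega
  obtain ⟨m, hum, hmw, hdm⟩ := hG.quadrangle_condition huv hvw hwu.symm hdu hdw
  have hmv : m ≠ v := by rintro rfl; omega
  refine ⟨m, hmw, hum, by omega, ?_, ?_⟩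
  · rw [Sym2.eq_swap, hc w m u v hmw.symm hum.symm huv hvw hwu hmv, hcuv]
  · rw [Sym2.eq_swap, ← hc v w m u hvw hmw.symm hum.symm huv hmv.symm hwu, hcvw]

theorem exists_closer_of_farthest_of_forall_length_le (hG : IsMedianGraph G)
    (hc : OppositeEdgesSameColor G c) {z v : V} (W : G.Walk v v) (hW : W.IsCycle)
    (hWc : MonochromaticCycle c W) (hlen : 5 ≤ W.length) (hz : z ∈ W.support)
    (hfar : ∀ x ∈ W.support, G.dist z x ≤ G.dist z v)
    (hmin : ∀ (b : V) (W' : G.Walk b b), W'.IsCycle → MonochromaticCycle c W' →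
      W.length ≤ W'.length) :
    ∃ (b : V) (W' : G.Walk b b), W'.IsCycle ∧ MonochromaticCycle c W' ∧
      W'.length = W.length ∧ z ∈ W'.support ∧ W'.sumDist z < W.sumDist z := by
  classical
  obtain ⟨k, hk⟩ := hWc
  obtain ⟨w, u, hvw, huv, P, rfl⟩ := W.exists_eq_cons_concat (by omega)
  obtain ⟨hP, -, hwu⟩ := (isCycle_cons_concat_iff hvw huv P).mp hW
  simp only [length_cons, length_concat] at hlen hmin ⊢
  obtain ⟨m, hmw, hum, hdm, hcmw, hcum⟩ := hG.exists_square_closer hc hvw huv hwu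
    (hfar w (by simp)) (hfar u (by simp)) (hk _ (by simp)) (hk _ (by simp))
  have hmP : m ∉ P.support := fun hm ↦ by
    obtain ⟨q, hq, hqlen, hqedges⟩ :=
      exists_isCycle_of_adj_of_mem_support hP hm hmw hum.symm (by omega)
    have := hmin m q hq ⟨k, fun e he ↦ by
      rcases List.mem_cons.mp (hqedges he) with rfl | he
      · exact hcmw
      rcases List.mem_cons.mp he with rfl | he
      · rw [Sym2.eq_swap]; exact hcum
      · exact hk e (by simp [he])⟩
    omega
  refine ⟨m, cons hmw (P.concat hum), (isCycle_cons_concat_iff hmw hum P).mpr ⟨hP, hmP, hwu⟩,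
    ⟨k, fun e he ↦ ?_⟩, by simp, ?_, ?_⟩
  · simp only [edges_cons, edges_concat, List.concat_eq_append, List.mem_cons, List.mem_append,
      List.not_mem_nil, or_false] at he
    rcases he with rfl | he | rfl
    · exact hcmw
    · exact hk e (by simp [he])
    · exact hcum
  · have hzv : z ≠ v := by rintro rfl; simp at hdm
    have : z ∈ P.support := by simpa [support_concat, hzv] using hz
    simp [support_concat, this]
  · rw [sumDist_cons_concat, sumDist_cons_concat]
    omega

theorem exists_closer_of_forall_length_le (hG : IsMedianGraph G)
    (hc : OppositeEdgesSameColor G c) {z a : V} (W : G.Walk a a) (hW : W.IsCycle)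
    (hWc : MonochromaticCycle c W) (hlen : 5 ≤ W.length) (hz : z ∈ W.support)
    (hmin : ∀ (b : V) (W' : G.Walk b b), W'.IsCycle → MonochromaticCycle c W' →
      W.length ≤ W'.length) :
    ∃ (b : V) (W' : G.Walk b b), W'.IsCycle ∧ MonochromaticCycle c W' ∧
      W'.length = W.length ∧ z ∈ W'.support ∧ W'.sumDist z < W.sumDist z := by
  classical
  obtain ⟨v, hv, hfar⟩ := W.support.toFinset.exists_max_image (G.dist z) ⟨a, by simp⟩
  rw [List.mem_toFinset] at hv
  obtain ⟨k, hk⟩ := hWc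
  simpa [sumDist_rotate] using hG.exists_closer_of_farthest_of_forall_length_le hc
    (W.rotate v hv) (hW.rotate hv) ⟨k, fun e he ↦ hk e ((W.rotate_edges v hv).perm.subset he)⟩
    (by simpa using hlen) (by simpa using hz) (fun x hx ↦ hfar x (by simpa using hx))
    (by simpa using hmin)

theorem length_le_four_of_forall_length_le (hG : IsMedianGraph G)
    (hc : OppositeEdgesSameColor G c) {a : V} (W : G.Walk a a) (hW : W.IsCycle)
    (hWc : MonochromaticCycle c W)
    (hmin : ∀ (b : V) (W' : G.Walk b b), W'.IsCycle → MonochromaticCycle c W' →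
      W.length ≤ W'.length) :
    W.length ≤ 4 := by
  classical
  by_contra! hlen
  have hex : ∃ n, ∃ (b : V) (W' : G.Walk b b), W'.IsCycle ∧ MonochromaticCycle c W' ∧
      W'.length = W.length ∧ a ∈ W'.support ∧ W'.sumDist a = n :=
    ⟨_, a, W, hW, hWc, rfl, W.start_mem_support, rfl⟩
  obtain ⟨b, W', hW', hW'c, hlen', ha, hsum⟩ := Nat.find_spec hex
  obtain ⟨b', W'', hW'', hW''c, hlen'', ha', hlt⟩ :=
    hG.exists_closer_of_forall_length_le hc W' hW' hW'c (by omega) ha (hlen' ▸ hmin)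
  exact Nat.find_min hex (hsum ▸ hlt) ⟨b', W'', hW'', hW''c, hlen''.trans hlen', ha', rfl⟩

end IsMedianGraph

/-- Let `G` be a median graph whose edges are colored so that opposite edges of
every 4-cycle receive the same color. Then `G` contains a monochromatic cycle
iff it contains a monochromatic 4-cycle. -/
theorem monochromatic_cycle_iff_monochromatic_four_cycle {V C : Type}
    (G : SimpleGraph V) (hG : IsMedianGraph G) (c : Sym2 V → C)
    (hc : ∀ x1 x2 x3 x4 : V, G.Adj x1 x2 → G.Adj x2 x3 → G.Adj x3 x4 →
      G.Adj x4 x1 → x1 ≠ x3 → x2 ≠ x4 → c s(x1, x2) = c s(x3, x4)) :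
    (∃ (v : V) (w : G.Walk v v), w.IsCycle ∧ MonochromaticCycle c w) ↔
      (∃ (v : V) (w : G.Walk v v), w.IsCycle ∧ w.length = 4 ∧
        MonochromaticCycle c w) := by
  classical
  constructor
  · rintro ⟨v, W, hW, hWc⟩
    have hex : ∃ n, ∃ (b : V) (W' : G.Walk b b), W'.IsCycle ∧ MonochromaticCycle c W' ∧
        W'.length = n := ⟨_, v, W, hW, hWc, rfl⟩
    obtain ⟨b, W₀, hW₀, hW₀c, hlen⟩ := Nat.find_spec hex
    have hmin : ∀ (b' : V) (W' : G.Walk b' b'), W'.IsCycle → MonochromaticCycle c W' →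
        W₀.length ≤ W'.length :=
      fun b' W' h h' ↦ hlen ▸ Nat.find_min' hex ⟨b', W', h, h', rfl⟩
    have hle := hG.length_le_four_of_forall_length_le hc W₀ hW₀ hW₀c hmin
    have hge := hW₀.three_le_length
    obtain ⟨r, hr⟩ := hG.even_length W₀
    exact ⟨b, W₀, hW₀, by omega, hW₀c⟩
  · rintro ⟨v, W, hW, -, hWc⟩
    exact ⟨v, W, hW, hWc⟩
end

section
/- For every finite graph F, the incompatibility graph Inc(κ(F)) of the convex splits of the simplex graph κ(F) is isomorphic to F. -/
open SimpleGraph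

/-- A set of vertices is convex if it contains the interval between any two of
its elements. -/
def IsConvexSet {V : Type} (G : SimpleGraph V) (S : Set V) : Prop :=
  ∀ u ∈ S, ∀ v ∈ S, gInterval G u v ⊆ S

/-- A convex split of `G` is an unordered pair `{A, B}` of nonempty convex sets
partitioning the vertex set. -/
def IsConvexSplit {V : Type} (G : SimpleGraph V) (P : Set (Set V)) : Prop :=
  ∃ A B : Set V, P = {A, B} ∧ A.Nonempty ∧ B.Nonempty ∧
    IsConvexSet G A ∧ IsConvexSet G B ∧ A ∪ B = Set.univ ∧ Disjoint A B

/-- Two splits are incompatible when all four pairwise intersections of their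
parts are nonempty. -/
def SplitsIncompatible {V : Type} (P Q : Set (Set V)) : Prop :=
  ∀ A ∈ P, ∀ B ∈ Q, (A ∩ B : Set V).Nonempty

/-- The incompatibility graph of the convex splits of `G`. -/
def IncGraph {V : Type} (G : SimpleGraph V) :
    SimpleGraph {P : Set (Set V) // IsConvexSplit G P} :=
  SimpleGraph.fromRel (fun P Q => SplitsIncompatible P.1 Q.1)

/-- The simplex graph `κ(F)` of a graph `F`: vertices are the cliques of `F`
(including the empty clique), two cliques being adjacent iff one is obtained
from the other by adding a single vertex. -/
def simplexGraph {α : Type} (F : SimpleGraph α) :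
    SimpleGraph {s : Finset α // F.IsClique (s : Set α)} :=
  SimpleGraph.fromRel (fun s t =>
    ∃ a : α, a ∉ s.1 ∧ (t.1 : Set α) = insert a (s.1 : Set α))

/-!
Distances in `κ(F)` are sizes of symmetric differences, so the interval between cliques `S` and
`T` consists of the cliques `Z` with `S ∩ T ⊆ Z ⊆ S ∪ T`. Hence, for every vertex `a`, the
cliques containing `a` and those avoiding `a` form a convex split. Conversely, let `A` be the side
of a convex split not containing `∅`. A clique all of whose singletons lie in the other side lies
there too (`insert x S` lies between `S` and `{x}`), so every member of `A` contains some `a`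
with `{a} ∈ A`; two distinct singletons in `A` would put `∅` between them, and a clique
containing `a` has `{a}` between itself and `∅`. So `A` is the set of cliques containing `a`.
Finally, the splits of `a ≠ b` are incompatible iff some clique contains both `a` and `b`, that
is, iff `a` and `b` are adjacent.
-/

open scoped symmDiff
open Finset

theorem SimpleGraph.Walk.le_length_add {V : Type} {G : SimpleGraph V} (f : V → ℕ)
    (hf_adj : ∀ u w, G.Adj u w → f u ≤ f w + 1) {u v : V} (p : G.Walk u v) :
    f u ≤ p.length + f v := by
  induction p with
  | nil => simp
  | cons huw _ ih => have := hf_adj _ _ huw; simp only [Walk.length_cons]; omega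

theorem SimpleGraph.dist_eq_of_descent {V : Type} {G : SimpleGraph V} {t : V} (f : V → ℕ)
    (hf_t : f t = 0) (hf_adj : ∀ u w, G.Adj u w → f u ≤ f w + 1)
    (hf_desc : ∀ u, u ≠ t → ∃ w, G.Adj u w ∧ f w < f u) (u : V) :
    G.dist u t = f u := by
  have walk_le : ∀ n u, f u = n → ∃ p : G.Walk u t, p.length ≤ n := by
    intro n
    induction n using Nat.strong_induction_on with
    | _ n ih =>
      intro u hu
      by_cases hut : u = t
      · subst hut
        exact ⟨.nil, Nat.zero_le n⟩
      obtain ⟨w, huw, hlt⟩ := hf_desc u hut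
      obtain ⟨p, hp⟩ := ih (f w) (hu ▸ hlt) w rfl
      exact ⟨.cons huw p, by have := hf_adj u w huw; simp only [Walk.length_cons]; omega⟩
  obtain ⟨p, hp⟩ := walk_le (f u) u rfl
  obtain ⟨q, hq⟩ := Reachable.exists_walk_length_eq_dist ⟨p⟩
  have := q.le_length_add f hf_adj
  exact le_antisymm ((G.dist_le p).trans hp) (by omega)

theorem Finset.card_symmDiff_eq_add_iff {α : Type} [DecidableEq α] {s t : Finset α} :
    #(s ∆ t) = #s + #t ↔ Disjoint s t := by
  refine ⟨fun h => card_union_eq_card_add_card.mp (le_antisymm (card_union_le s t) ?_),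
    fun h => by rw [h.symmDiff_eq_sup, sup_eq_union, card_union_of_disjoint h]⟩
  exact h ▸ card_le_card symmDiff_le_sup

theorem Finset.card_symmDiff_add_card_symmDiff_eq_iff {α : Type} [DecidableEq α]
    {s t u : Finset α} :
    #(s ∆ u) + #(u ∆ t) = #(s ∆ t) ↔ s ∩ t ⊆ u ∧ u ⊆ s ∪ t := by
  have hst : (s ∆ u) ∆ (u ∆ t) = s ∆ t := by
    rw [symmDiff_assoc, symmDiff_symmDiff_cancel_left]
  rw [← hst, eq_comm, card_symmDiff_eq_add_iff, disjoint_left]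
  simp only [subset_iff, mem_symmDiff, mem_inter, mem_union]
  grind

section SimplexGraph

variable {α : Type} {F : SimpleGraph α} {S T Z : {s : Finset α // F.IsClique (s : Set α)}}

theorem simplexGraph_adj_iff : (simplexGraph F).Adj S T ↔ S.1 ⋖ T.1 ∨ T.1 ⋖ S.1 := by
  have hcov : ∀ U W : {s : Finset α // F.IsClique (s : Set α)},
      (∃ a, a ∉ U.1 ∧ (W.1 : Set α) = insert a (U.1 : Set α)) ↔ U.1 ⋖ W.1 := by
    intro U W
    simp only [← coe_covBy_coe, Set.covBy_iff_exists_insert, mem_coe, eq_comm]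
  rw [simplexGraph, fromRel_adj, hcov, hcov]
  refine ⟨And.right, fun h => ⟨?_, h⟩⟩
  rintro rfl
  exact h.elim (fun h => h.ne rfl) (fun h => h.ne rfl)

variable [DecidableEq α]

theorem card_symmDiff_eq_one_of_simplexGraph_adj (h : (simplexGraph F).Adj S T) :
    #(S.1 ∆ T.1) = 1 := by
  rcases simplexGraph_adj_iff.mp h with h | h
  · rw [symmDiff_of_le h.le, (covBy_iff_card_sdiff_eq_one.mp h).2]
  · rw [symmDiff_comm, symmDiff_of_le h.le, (covBy_iff_card_sdiff_eq_one.mp h).2]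

theorem exists_simplexGraph_adj_card_symmDiff_lt (h : S ≠ T) :
    ∃ W, (simplexGraph F).Adj S W ∧ #(W.1 ∆ T.1) < #(S.1 ∆ T.1) := by
  by_cases hST : S.1 ⊆ T.1
  · obtain ⟨x, hxT, hxS⟩ :=
      exists_of_ssubset (ssubset_of_subset_of_ne hST (Subtype.coe_ne_coe.mpr h))
    have hW : insert x S.1 ⊆ T.1 := insert_subset hxT hST
    refine ⟨⟨insert x S.1, T.2.subset (by exact_mod_cast hW)⟩,
      simplexGraph_adj_iff.mpr (.inl (covBy_insert hxS)), ?_⟩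
    have : insert x S.1 ∆ T.1 = (S.1 ∆ T.1).erase x := by
      ext
      simp only [mem_symmDiff, mem_insert, mem_erase]
      grind
    rw [this]
    exact card_erase_lt_of_mem (mem_symmDiff.mpr (.inr ⟨hxT, hxS⟩))
  · obtain ⟨x, hxS, hxT⟩ := not_subset.mp hST
    refine ⟨⟨S.1.erase x, S.2.subset (by exact_mod_cast erase_subset x S.1)⟩,
      simplexGraph_adj_iff.mpr (.inr (erase_covBy hxS)), ?_⟩
    have : S.1.erase x ∆ T.1 = (S.1 ∆ T.1).erase x := by
      ext
      simp only [mem_symmDiff, mem_erase]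
      grind
    rw [this]
    exact card_erase_lt_of_mem (mem_symmDiff.mpr (.inl ⟨hxS, hxT⟩))

theorem simplexGraph_dist : (simplexGraph F).dist S T = #(S.1 ∆ T.1) :=
  dist_eq_of_descent (fun U => #(U.1 ∆ T.1)) (by simp)
    (fun U W hUW => by
      calc #(U.1 ∆ T.1)
          ≤ #(U.1 ∆ W.1 ∪ W.1 ∆ T.1) := card_le_card (symmDiff_triangle _ _ _)
        _ ≤ #(U.1 ∆ W.1) + #(W.1 ∆ T.1) := card_union_le _ _
        _ = #(W.1 ∆ T.1) + 1 := by rw [card_symmDiff_eq_one_of_simplexGraph_adj hUW, add_comm])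
    (fun _ => exists_simplexGraph_adj_card_symmDiff_lt) S

theorem mem_gInterval_simplexGraph_iff :
    Z ∈ gInterval (simplexGraph F) S T ↔ S.1 ∩ T.1 ⊆ Z.1 ∧ Z.1 ⊆ S.1 ∪ T.1 := by
  simp only [gInterval, Set.mem_ofPred_eq, simplexGraph_dist,
    card_symmDiff_add_card_symmDiff_eq_iff]

end SimplexGraph

section Halfspaces

variable {α : Type} {F : SimpleGraph α}

def emptyClique (F : SimpleGraph α) : {s : Finset α // F.IsClique (s : Set α)} :=
  ⟨∅, by simp⟩

def singletonClique (F : SimpleGraph α) (a : α) : {s : Finset α // F.IsClique (s : Set α)} :=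
  ⟨{a}, by simp⟩

def cliquesContaining (F : SimpleGraph α) (a : α) :
    Set {s : Finset α // F.IsClique (s : Set α)} :=
  {S | a ∈ S.1}

theorem isConvexSet_cliquesContaining (a : α) :
    IsConvexSet (simplexGraph F) (cliquesContaining F a) := by
  classical
  intro S hS T hT Z hZ
  exact (mem_gInterval_simplexGraph_iff.mp hZ).1 (mem_inter.mpr ⟨hS, hT⟩)

theorem isConvexSet_compl_cliquesContaining (a : α) :
    IsConvexSet (simplexGraph F) (cliquesContaining F a)ᶜ := by
  classical
  intro S hS T hT Z hZ haZ
  rcases mem_union.mp ((mem_gInterval_simplexGraph_iff.mp hZ).2 haZ) with h | h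
  exacts [hS h, hT h]

theorem isConvexSplit_cliquesContaining (a : α) :
    IsConvexSplit (simplexGraph F) {cliquesContaining F a, (cliquesContaining F a)ᶜ} :=
  ⟨_, _, rfl, ⟨singletonClique F a, mem_singleton_self a⟩,
    ⟨emptyClique F, notMem_empty a⟩,
    isConvexSet_cliquesContaining a, isConvexSet_compl_cliquesContaining a,
    Set.union_compl_self _, disjoint_compl_right⟩

theorem IsConvexSet.mem_of_forall_singletonClique_mem
    {C : Set {s : Finset α // F.IsClique (s : Set α)}}
    (hC : IsConvexSet (simplexGraph F) C) (hempty : emptyClique F ∈ C)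
    (S : {s : Finset α // F.IsClique (s : Set α)})
    (hS : ∀ x ∈ S.1, singletonClique F x ∈ C) : S ∈ C := by
  classical
  obtain ⟨s, hs⟩ := S
  induction s using Finset.induction_on with
  | empty => exact hempty
  | insert x s hxs ih =>
    have hs' : F.IsClique (s : Set α) := hs.subset (by simp)
    refine hC _ (ih hs' fun y hy => hS y (mem_insert_of_mem hy)) _
      (hS x (mem_insert_self x s)) (mem_gInterval_simplexGraph_iff.mpr ⟨?_, ?_⟩) <;>
    intro y <;>
    simp only [singletonClique, mem_inter, mem_union, mem_insert, mem_singleton] <;>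
    tauto

theorem exists_eq_cliquesContaining {A : Set {s : Finset α // F.IsClique (s : Set α)}}
    (hA : IsConvexSet (simplexGraph F) A) (hAc : IsConvexSet (simplexGraph F) Aᶜ)
    (hne : A.Nonempty) (hempty : emptyClique F ∉ A) : ∃ a, A = cliquesContaining F a := by
  classical
  have exists_singleton : ∀ S ∈ A, ∃ x ∈ S.1, singletonClique F x ∈ A := by
    intro S hSA
    by_contra! h
    exact hAc.mem_of_forall_singletonClique_mem hempty S h hSA
  obtain ⟨S₀, hS₀⟩ := hne
  obtain ⟨a, -, ha⟩ := exists_singleton S₀ hS₀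
  refine ⟨a, Set.ext fun S => ⟨fun hSA => ?_, fun haS => ?_⟩⟩
  · obtain ⟨x, hxS, hx⟩ := exists_singleton S hSA
    by_contra haS
    have hxa : x ≠ a := by rintro rfl; exact haS hxS
    refine hempty (hA _ hx _ ha (mem_gInterval_simplexGraph_iff.mpr ⟨?_, empty_subset _⟩))
    simp only [singletonClique, emptyClique, subset_empty, ← disjoint_iff_inter_eq_empty]
    exact disjoint_singleton.mpr hxa
  · by_contra hSA
    refine hAc _ hempty _ hSA (mem_gInterval_simplexGraph_iff.mpr ⟨?_, ?_⟩) ha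
    · simp [emptyClique]
    · simpa [singletonClique, emptyClique] using haS.out

end Halfspaces

theorem incGraph_adj_iff {V : Type} {G : SimpleGraph V}
    {P Q : {P : Set (Set V) // IsConvexSplit G P}} :
    (IncGraph G).Adj P Q ↔ SplitsIncompatible P.1 Q.1 := by
  rw [IncGraph, fromRel_adj]
  refine ⟨fun ⟨_, h⟩ => h.elim id fun h A hA B hB => Set.inter_comm A B ▸ h B hB A hA,
    fun h => ⟨?_, .inl h⟩⟩
  rintro rfl
  obtain ⟨A, B, hP, -, -, -, -, -, hAB⟩ := P.2
  exact (h A (by simp [hP]) B (by simp [hP])).ne_empty (Set.disjoint_iff_inter_eq_empty.mp hAB)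

section Splits

variable {α : Type} {F : SimpleGraph α}

theorem splitsIncompatible_cliquesContaining_iff {a b : α} :
    SplitsIncompatible {cliquesContaining F a, (cliquesContaining F a)ᶜ}
      {cliquesContaining F b, (cliquesContaining F b)ᶜ} ↔ F.Adj a b := by
  classical
  simp only [SplitsIncompatible, Set.forall_mem_insert, Set.mem_singleton_iff, forall_eq]
  constructor
  · rintro ⟨⟨⟨⟨S, hS⟩, haS, hbS⟩, ⟨T, haT, hbT⟩⟩, -⟩
    exact hS haS hbS (by rintro rfl; exact hbT haT)
  · intro hab
    have hne : a ≠ b := hab.ne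
    have hab' : F.IsClique (({a, b} : Finset α) : Set α) := by simpa using fun _ => hab
    refine ⟨⟨⟨⟨{a, b}, hab'⟩, ?_⟩, ⟨singletonClique F a, ?_⟩⟩,
      ⟨singletonClique F b, ?_⟩, ⟨emptyClique F, ?_⟩⟩ <;>
      simp [cliquesContaining, singletonClique, emptyClique, hne, hne.symm]

def cliquesContainingSplit (F : SimpleGraph α) (a : α) :
    {P : Set (Set {s : Finset α // F.IsClique (s : Set α)}) //
      IsConvexSplit (simplexGraph F) P} :=
  ⟨_, isConvexSplit_cliquesContaining a⟩

theorem cliquesContainingSplit_injective : Function.Injective (cliquesContainingSplit F) := by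
  intro a b h
  rcases Set.pair_eq_pair_iff.mp (congrArg Subtype.val h) with ⟨h, -⟩ | ⟨h, -⟩
  · have : singletonClique F a ∈ cliquesContaining F b := h ▸ mem_singleton_self a
    exact (mem_singleton.mp this).symm
  · have : emptyClique F ∈ cliquesContaining F a := h ▸ notMem_empty b
    exact absurd this (notMem_empty a)

theorem cliquesContainingSplit_surjective :
    Function.Surjective (cliquesContainingSplit F) := by
  rintro ⟨P, A, B, rfl, hAne, hBne, hA, hB, hAB, hdisj⟩
  obtain rfl : Aᶜ = B := IsCompl.compl_eq ⟨hdisj, codisjoint_iff.mpr hAB⟩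
  by_cases hempty : emptyClique F ∈ A
  · obtain ⟨a, ha⟩ := exists_eq_cliquesContaining hB (by rwa [compl_compl]) hBne (by simpa)
    refine ⟨a, Subtype.ext ?_⟩
    simp only [cliquesContainingSplit, ← ha, compl_compl, Set.pair_comm]
  · obtain ⟨a, rfl⟩ := exists_eq_cliquesContaining hA hB hAne hempty
    exact ⟨a, rfl⟩

end Splits

theorem incGraph_simplexGraph_iso_general {α : Type} (F : SimpleGraph α) :
    Nonempty (IncGraph (simplexGraph F) ≃g F) :=
  ⟨RelIso.symm ⟨Equiv.ofBijective _
    ⟨cliquesContainingSplit_injective, cliquesContainingSplit_surjective⟩,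
    incGraph_adj_iff.trans splitsIncompatible_cliquesContaining_iff⟩⟩

/-- For every finite graph `F`, the incompatibility graph of the convex splits
of the simplex graph `κ(F)` is isomorphic to `F`. -/
theorem incGraph_simplexGraph_iso {α : Type} [Fintype α] (F : SimpleGraph α) :
    Nonempty (IncGraph (simplexGraph F) ≃g F) :=
  incGraph_simplexGraph_iso_general F
end

section
/- For every k ≥ 2, the odd cogwheel κ(C_{2k+1}) admits no isometric embedding into the Cartesian product of any two trees. -/
/-!
In a 4-cycle of the Cartesian product of two forests, the two edges at any corner move in
different factors: two consecutive edges in the same factor force the whole cycle into a single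
fibre, where it would be a 4-cycle of a forest. Isometric embeddings preserve 4-cycles, and
`κ(C n)` contains the 4-cycles `hub, 2i, 2i + 1, 2i + 2` (rim indices mod `2n`). So the factor
in which the spoke to `2i` moves alternates with `i`, which is impossible once the `n` spokes
close up with `n` odd.
-/

open SimpleGraph

/-- The cogwheel `κ(C n)`: a cycle of length `2 * n` (on the vertices `some i`)
together with a hub vertex (`none`) adjacent to the `n` alternate vertices
`some i` with `i` even. -/
def cogwheel (n : ℕ) : SimpleGraph (Option (Fin (2 * n))) :=
  SimpleGraph.fromRel (fun a b =>
    match a, b with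
    | some i, some j => (j : ℕ) = ((i : ℕ) + 1) % (2 * n)
    | some i, none => (i : ℕ) % 2 = 0
    | _, _ => False)

namespace SimpleGraph

variable {V W α β : Type*}

structure IsFourCycle (G : SimpleGraph V) (x u w v : V) : Prop where
  adj_xu : G.Adj x u
  adj_uw : G.Adj u w
  adj_wv : G.Adj w v
  adj_vx : G.Adj v x
  ne_xw : x ≠ w
  ne_uv : u ≠ v

theorem IsFourCycle.map {G : SimpleGraph V} {G' : SimpleGraph W} (e : G ↪g G') {x u w v : V}
    (h : G.IsFourCycle x u w v) : G'.IsFourCycle (e x) (e u) (e w) (e v) where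
  adj_xu := e.map_adj_iff.mpr h.adj_xu
  adj_uw := e.map_adj_iff.mpr h.adj_uw
  adj_wv := e.map_adj_iff.mpr h.adj_wv
  adj_vx := e.map_adj_iff.mpr h.adj_vx
  ne_xw := e.injective.ne h.ne_xw
  ne_uv := e.injective.ne h.ne_uv

theorem IsAcyclic.not_isFourCycle {G : SimpleGraph V} (hG : G.IsAcyclic) {x u w v : V} :
    ¬ G.IsFourCycle x u w v := by
  intro h
  let p : G.Path x w := ⟨.cons h.adj_xu (.cons h.adj_uw .nil), by
    simp [h.adj_xu.ne, h.adj_uw.ne, h.ne_xw]⟩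
  let q : G.Path x w := ⟨.cons h.adj_vx.symm (.cons h.adj_wv.symm .nil), by
    simp [h.adj_vx.ne', h.adj_wv.ne', h.ne_xw]⟩
  have hpq : p = q := (hG.subsingleton_path x w).elim p q
  exact h.ne_uv (by simpa [p, q] using congrArg (fun r : G.Path x w => r.1.snd) hpq)

variable {G : SimpleGraph α} {H : SimpleGraph β}

theorem boxProd_adj_fst_eq_of_snd_ne {x y : α × β} (h : (G □ H).Adj x y) (hne : x.2 ≠ y.2) :
    x.1 = y.1 := by
  grind [boxProd_adj]

theorem boxProd_adj_of_snd_eq {x y : α × β} (h : (G □ H).Adj x y) (heq : x.2 = y.2) :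
    G.Adj x.1 y.1 := by
  grind [boxProd_adj, SimpleGraph.irrefl]

theorem IsAcyclic.snd_ne_of_isFourCycle_boxProd (hG : G.IsAcyclic) {x u w v : α × β}
    (h : (G □ H).IsFourCycle x u w v) (hu : x.2 = u.2) : x.2 ≠ v.2 := by
  intro hv
  by_cases huw : u.2 = w.2
  · have hwv : w.2 = v.2 := by rw [← huw, ← hu, hv]
    refine hG.not_isFourCycle (x := x.1) (u := u.1) (w := w.1) (v := v.1)
      ⟨boxProd_adj_of_snd_eq h.adj_xu hu, boxProd_adj_of_snd_eq h.adj_uw huw,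
        boxProd_adj_of_snd_eq h.adj_wv hwv, boxProd_adj_of_snd_eq h.adj_vx hv.symm, ?_, ?_⟩
    · exact fun h1 => h.ne_xw (Prod.ext h1 (hu.trans huw))
    · exact fun h1 => h.ne_uv (Prod.ext h1 (hu.symm.trans hv))
  · have hwv : w.2 ≠ v.2 := by rwa [← hv, hu, ne_comm]
    exact h.ne_uv (Prod.ext ((boxProd_adj_fst_eq_of_snd_ne h.adj_uw huw).trans
      (boxProd_adj_fst_eq_of_snd_ne h.adj_wv hwv)) (hu.symm.trans hv))

theorem isFourCycle_boxProd_snd_eq_iff (hG : G.IsAcyclic) (hH : H.IsAcyclic) {x u w v : α × β}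
    (h : (G □ H).IsFourCycle x u w v) : x.2 = u.2 ↔ x.2 ≠ v.2 := by
  refine ⟨hG.snd_ne_of_isFourCycle_boxProd h, fun hv => by_contra fun hu => ?_⟩
  exact hH.snd_ne_of_isFourCycle_boxProd (h.map (boxProdComm G H).toEmbedding)
    (boxProd_adj_fst_eq_of_snd_ne h.adj_xu hu) (boxProd_adj_fst_eq_of_snd_ne h.adj_vx.symm hv)

end SimpleGraph

namespace cogwheel

variable {n : ℕ} [NeZero n]

theorem adj_none_ofNat_two_mul (i : ℕ) :
    (cogwheel n).Adj none (some (Fin.ofNat (2 * n) (2 * i))) := by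
  simp only [cogwheel, fromRel_adj, ne_eq, reduceCtorEq, not_false_eq_true, true_and]
  right
  simp only [Fin.val_ofNat, Nat.mod_mod_of_dvd _ (dvd_mul_right 2 n), Nat.mul_mod_right]

theorem adj_ofNat_succ (j : ℕ) :
    (cogwheel n).Adj (some (Fin.ofNat (2 * n) j)) (some (Fin.ofNat (2 * n) (j + 1))) := by
  have h2n : 2 ≤ 2 * n := by have := NeZero.pos n; omega
  simp only [cogwheel, fromRel_adj, ne_eq, Option.some.injEq, Fin.ext_iff, Fin.val_ofNat]
  refine ⟨fun h => ?_, Or.inl (Nat.mod_add_mod j (2 * n) 1).symm⟩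
  have hdvd := (Nat.modEq_iff_dvd' (Nat.le_add_right j 1)).mp h
  rw [Nat.add_sub_cancel_left] at hdvd
  have := Nat.le_of_dvd one_pos hdvd
  omega

theorem isFourCycle_ofNat (hn : 2 ≤ n) (i : ℕ) :
    (cogwheel n).IsFourCycle none (some (Fin.ofNat (2 * n) (2 * i)))
      (some (Fin.ofNat (2 * n) (2 * i + 1))) (some (Fin.ofNat (2 * n) (2 * (i + 1)))) where
  adj_xu := adj_none_ofNat_two_mul i
  adj_uw := adj_ofNat_succ (2 * i)
  adj_wv := adj_ofNat_succ (2 * i + 1)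
  adj_vx := (adj_none_ofNat_two_mul (i + 1)).symm
  ne_xw := by simp
  ne_uv := by
    simp only [ne_eq, Option.some.injEq, Fin.ext_iff, Fin.val_ofNat]
    intro h
    have hdvd := (Nat.modEq_iff_dvd' (by omega)).mp h
    rw [show 2 * (i + 1) - 2 * i = 2 by omega] at hdvd
    have := Nat.le_of_dvd two_pos hdvd
    omega

end cogwheel

namespace IsIsometricEmbedding

variable {A B : Type} {H : SimpleGraph A} {G : SimpleGraph B} {f : A → B}

theorem adj_iff (hf : IsIsometricEmbedding H G f) {x y : A} : G.Adj (f x) (f y) ↔ H.Adj x y := by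
  rw [← dist_eq_one_iff_adj, ← dist_eq_one_iff_adj, hf]

theorem ne_of_reachable (hf : IsIsometricEmbedding H G f) {x y : A} (hr : H.Reachable x y)
    (hne : x ≠ y) : f x ≠ f y := fun h =>
  (hr.pos_dist_of_ne hne).ne' (by rw [← hf, h, dist_self])

theorem isFourCycle (hf : IsIsometricEmbedding H G f) {x u w v : A} (h : H.IsFourCycle x u w v) :
    G.IsFourCycle (f x) (f u) (f w) (f v) where
  adj_xu := hf.adj_iff.mpr h.adj_xu
  adj_uw := hf.adj_iff.mpr h.adj_uw
  adj_wv := hf.adj_iff.mpr h.adj_wv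
  adj_vx := hf.adj_iff.mpr h.adj_vx
  ne_xw := hf.ne_of_reachable (h.adj_xu.reachable.trans h.adj_uw.reachable) h.ne_xw
  ne_uv := hf.ne_of_reachable (h.adj_uw.reachable.trans h.adj_wv.reachable) h.ne_uv

end IsIsometricEmbedding

theorem iff_not_of_odd_of_forall_succ_iff_not {P : ℕ → Prop} (h : ∀ i, P (i + 1) ↔ ¬ P i)
    {n : ℕ} (hn : Odd n) : P n ↔ ¬ P 0 := by
  obtain ⟨m, rfl⟩ := hn
  induction m with
  | zero => exact h 0
  | succ m ih =>
    rw [show 2 * (m + 1) + 1 = 2 * m + 1 + 1 + 1 by ring, h, h, ih]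
    tauto

theorem cogwheel.not_isIsometricEmbedding_boxProd {n : ℕ} (hn : 2 ≤ n) (hodd : Odd n)
    {A B : Type} {G : SimpleGraph A} {H : SimpleGraph B} (hG : G.IsAcyclic) (hH : H.IsAcyclic)
    (f : Option (Fin (2 * n)) → A × B) : ¬ IsIsometricEmbedding (cogwheel n) (G □ H) f := by
  intro hf
  have : NeZero n := ⟨by omega⟩
  -- `P i`: the spoke to the rim vertex `2i` is mapped to an edge of the first factor `G`
  let P (i : ℕ) : Prop := (f none).2 = (f (some (Fin.ofNat (2 * n) (2 * i)))).2
  have hstep (i : ℕ) : P (i + 1) ↔ ¬ P i := iff_not_comm.mp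
    (isFourCycle_boxProd_snd_eq_iff hG hH (hf.isFourCycle (cogwheel.isFourCycle_ofNat hn i)))
  have hperiod : P n ↔ P 0 := by simp [P]
  have := iff_not_of_odd_of_forall_succ_iff_not hstep hodd
  tauto

/-- For every `k ≥ 2`, the odd cogwheel `κ(C_{2k+1})` admits no isometric
embedding into the Cartesian product of any two trees. -/
theorem oddCogwheel_not_embeds_in_two_trees (k : ℕ) (hk : 2 ≤ k) :
    ¬ EmbedsInTwoTrees (cogwheel (2 * k + 1)) := by
  rintro ⟨A, B, T₁, T₂, hT₁, hT₂, f, hf⟩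
  exact cogwheel.not_isIsometricEmbedding_boxProd (by omega) (odd_two_mul_add_one k)
    hT₁.isAcyclic hT₂.isAcyclic f hf
end

section
/- Let G be a cube-free median graph and let b be any vertex of G. Then every vertex x of G has at most two neighbors y with d_G(b,y) = d_G(b,x) − 1. -/
open SimpleGraph

/-- The 3-dimensional hypercube graph `Q₃`: vertices are functions
`Fin 3 → Bool`, two vertices being adjacent iff they differ in exactly one
coordinate. -/
def cubeGraph : SimpleGraph (Fin 3 → Bool) :=
  SimpleGraph.fromRel (fun x y => ∃! i : Fin 3, x i ≠ y i)

/-- A graph is cube-free if it has no induced subgraph isomorphic to `Q₃`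
(graph embeddings in the sense of `↪g` are exactly induced-subgraph
embeddings). -/
def CubeFree {V : Type} (G : SimpleGraph V) : Prop :=
  IsEmpty (cubeGraph ↪g G)

/-!
Suppose `x` had three distinct down-neighbours `y₁ y₂ y₃` with respect to `b`. Each pair `yᵢ, yⱼ`
has a common down-neighbour `wᵢⱼ` (the median of `yᵢ, yⱼ, b`). The `wᵢⱼ` are distinct, since `x`
is the only common neighbour of the three `yᵢ`, and `yₖ` is not adjacent to `wᵢⱼ`, since two
vertices have at most one common up-neighbour. Finally the median `z` of the three `wᵢⱼ` lies one
level below them. The vertices `x, yᵢ, wᵢⱼ, z` then span an induced `Q₃`.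
-/

instance : DecidableRel cubeGraph.Adj := fun a c =>
  decidable_of_iff (a ≠ c ∧ ((∃ i, a i ≠ c i ∧ ∀ j, a j ≠ c j → j = i) ∨
    ∃ i, c i ≠ a i ∧ ∀ j, c j ≠ a j → j = i)) Iff.rfl

theorem cubeGraph_eq_of_forall_adj_iff :
    ∀ a c : Fin 3 → Bool, (∀ d, cubeGraph.Adj d a ↔ cubeGraph.Adj d c) → a = c := by
  decide

def cubeGraphEmbeddingOfAdjIff {V : Type} {G : SimpleGraph V} (f : (Fin 3 → Bool) → V)
    (hf : ∀ a c, G.Adj (f a) (f c) ↔ cubeGraph.Adj a c) : cubeGraph ↪g G where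
  toFun := f
  inj' a c h := cubeGraph_eq_of_forall_adj_iff a c fun d => by rw [← hf, ← hf, h]
  map_rel_iff' := hf _ _

def cubeMap {V : Type} (x y₁ y₂ y₃ w₁₂ w₁₃ w₂₃ z : V) (a : Fin 3 → Bool) : V :=
  match a 0, a 1, a 2 with
  | false, false, false => x
  | true, false, false => y₁
  | false, true, false => y₂
  | false, false, true => y₃
  | true, true, false => w₁₂
  | true, false, true => w₁₃
  | false, true, true => w₂₃
  | true, true, true => z

namespace SimpleGraph

variable {V : Type} {G : SimpleGraph V}

theorem dist_eq_two_of_adj_of_adj {u v a : V} (hne : u ≠ v) (hnadj : ¬G.Adj u v)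
    (hua : G.Adj u a) (hav : G.Adj a v) : G.dist u v = 2 := by
  rw [dist, edist_eq_two_iff.mpr ⟨hne, hnadj, a, hua, hav.symm⟩]
  rfl

def DownAdj (G : SimpleGraph V) (b x y : V) : Prop :=
  G.Adj x y ∧ G.dist b y + 1 = G.dist b x

end SimpleGraph

namespace IsMedianGraph

variable {V : Type} {G : SimpleGraph V}

theorem downAdj_or_downAdj (hG : IsMedianGraph G) (b : V) {u v : V} (h : G.Adj u v) :
    G.DownAdj b u v ∨ G.DownAdj b v u := by
  obtain ⟨m, ⟨hm_uv, hm_vb, hm_ub⟩, -⟩ := hG.2 u v b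
  simp only [gInterval, Set.mem_ofPred_eq, dist_eq_one_iff_adj.mpr h] at hm_uv hm_vb hm_ub
  have := G.dist_comm (u := b) (v := u)
  have := G.dist_comm (u := b) (v := v)
  rcases (by omega : G.dist u m = 0 ∨ G.dist m v = 0) with hum | hmv
  · obtain rfl := hG.1.dist_eq_zero_iff.mp hum
    have := dist_eq_one_iff_adj.mpr h.symm
    exact .inr ⟨h.symm, by omega⟩
  · obtain rfl := hG.1.dist_eq_zero_iff.mp hmv
    exact .inl ⟨h, by omega⟩

theorem not_adj_of_dist_ne_add_one (hG : IsMedianGraph G) (b : V) {u v : V}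
    (huv : G.dist b u ≠ G.dist b v + 1) (hvu : G.dist b v ≠ G.dist b u + 1) : ¬G.Adj u v :=
  fun h => (hG.downAdj_or_downAdj b h).elim (fun h => huv h.2.symm) (fun h => hvu h.2.symm)

theorem dist_eq_two_of_downAdj (hG : IsMedianGraph G) (b : V) {x u v : V} (huv : u ≠ v)
    (hu : G.DownAdj b x u) (hv : G.DownAdj b x v) : G.dist u v = 2 := by
  obtain ⟨hxu, hu⟩ := hu
  obtain ⟨hxv, hv⟩ := hv
  exact dist_eq_two_of_adj_of_adj huv (hG.not_adj_of_dist_ne_add_one b (by omega) (by omega))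
    hxu.symm hxv

theorem existsUnique_adj_adj_adj (hG : IsMedianGraph G) {p q r : V} (hpq : G.dist p q = 2)
    (hqr : G.dist q r = 2) (hpr : G.dist p r = 2) :
    ∃! m, G.Adj p m ∧ G.Adj q m ∧ G.Adj r m := by
  refine (existsUnique_congr fun m => ?_).mp (hG.2 p q r)
  simp only [gInterval, Set.mem_ofPred_eq, hpq, hqr, hpr, ← dist_eq_one_iff_adj,
    G.dist_comm (u := m)]
  omega

theorem exists_downAdj_of_downAdj (hG : IsMedianGraph G) (b : V) {x u v : V} (huv : u ≠ v)
    (hu : G.DownAdj b x u) (hv : G.DownAdj b x v) : ∃ m, G.DownAdj b u m ∧ G.DownAdj b v m := by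
  have h2 := hG.dist_eq_two_of_downAdj b huv hu hv
  obtain ⟨m, ⟨hm_uv, hm_vb, hm_ub⟩, -⟩ := hG.2 u v b
  simp only [gInterval, Set.mem_ofPred_eq, h2, G.dist_comm (v := b)] at hm_uv hm_vb hm_ub
  have := hu.2
  have := hv.2
  have := G.dist_comm (u := v) (v := m)
  exact ⟨m, ⟨dist_eq_one_iff_adj.mp (by omega), by omega⟩,
    ⟨dist_eq_one_iff_adj.mp (by omega), by omega⟩⟩

theorem eq_of_downAdj_of_downAdj (hG : IsMedianGraph G) (b : V) {u v a c : V} (huv : u ≠ v)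
    (hau : G.DownAdj b a u) (hav : G.DownAdj b a v) (hcu : G.DownAdj b c u)
    (hcv : G.DownAdj b c v) : a = c := by
  obtain ⟨z, huz, hvz⟩ := hG.exists_downAdj_of_downAdj b huv hau hav
  -- otherwise `u` and `v` are two common neighbours of the pairwise-distance-2 triple `a, c, z`
  by_contra hac
  have := hau.2
  have := hcu.2
  have := huz.2
  have hac2 : G.dist a c = 2 := dist_eq_two_of_adj_of_adj hac
    (hG.not_adj_of_dist_ne_add_one b (by omega) (by omega)) hau.1 hcu.1.symm
  have haz2 : G.dist a z = 2 := dist_eq_two_of_adj_of_adj (by rintro rfl; omega)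
    (hG.not_adj_of_dist_ne_add_one b (by omega) (by omega)) hau.1 huz.1
  have hcz2 : G.dist c z = 2 := dist_eq_two_of_adj_of_adj (by rintro rfl; omega)
    (hG.not_adj_of_dist_ne_add_one b (by omega) (by omega)) hcu.1 huz.1
  exact huv ((hG.existsUnique_adj_adj_adj hac2 hcz2 haz2).unique
    ⟨hau.1, hcu.1, huz.1.symm⟩ ⟨hav.1, hcv.1, hvz.1.symm⟩)

theorem not_exists_downAdj_downAdj_downAdj (hG : IsMedianGraph G) (b : V) {x y₁ y₂ y₃ : V}
    (h₁₂ : y₁ ≠ y₂) (h₁₃ : y₁ ≠ y₃) (h₂₃ : y₂ ≠ y₃) (h₁ : G.DownAdj b x y₁)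
    (h₂ : G.DownAdj b x y₂) (h₃ : G.DownAdj b x y₃) :
    ¬∃ w, G.DownAdj b y₁ w ∧ G.DownAdj b y₂ w ∧ G.DownAdj b y₃ w := by
  rintro ⟨w, hw₁, hw₂, hw₃⟩
  have hwx := (hG.existsUnique_adj_adj_adj (hG.dist_eq_two_of_downAdj b h₁₂ h₁ h₂)
    (hG.dist_eq_two_of_downAdj b h₂₃ h₂ h₃) (hG.dist_eq_two_of_downAdj b h₁₃ h₁ h₃)).unique
    ⟨hw₁.1, hw₂.1, hw₃.1⟩ ⟨h₁.1.symm, h₂.1.symm, h₃.1.symm⟩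
  subst hwx
  have := h₁.2
  have := hw₁.2
  omega

theorem exists_downAdj_downAdj_downAdj (hG : IsMedianGraph G) (b : V)
    {y₁ y₂ y₃ w₁₂ w₁₃ w₂₃ : V} (e₁₂₁₃ : w₁₂ ≠ w₁₃) (e₁₂₂₃ : w₁₂ ≠ w₂₃) (e₁₃₂₃ : w₁₃ ≠ w₂₃)
    (h₁₂ : G.DownAdj b y₁ w₁₂) (h₁₃ : G.DownAdj b y₁ w₁₃) (h₂₁ : G.DownAdj b y₂ w₁₂)
    (h₂₃ : G.DownAdj b y₂ w₂₃) (h₃₁ : G.DownAdj b y₃ w₁₃) (h₃₂ : G.DownAdj b y₃ w₂₃)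
    (n₁ : ¬G.Adj y₁ w₂₃) :
    ∃ z, G.DownAdj b w₁₂ z ∧ G.DownAdj b w₁₃ z ∧ G.DownAdj b w₂₃ z := by
  obtain ⟨z, ⟨hz₁₂, hz₁₃, hz₂₃⟩, -⟩ := hG.existsUnique_adj_adj_adj
    (hG.dist_eq_two_of_downAdj b e₁₂₁₃ h₁₂ h₁₃) (hG.dist_eq_two_of_downAdj b e₁₃₂₃ h₃₁ h₃₂)
    (hG.dist_eq_two_of_downAdj b e₁₂₂₃ h₂₁ h₂₃)
  have := h₁₂.2
  have := h₁₃.2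
  have := h₂₁.2
  have := h₂₃.2
  rcases hG.downAdj_or_downAdj b hz₁₂ with hz | hz <;> have := hz.2
  · exact ⟨z, hz, ⟨hz₁₃, by omega⟩, ⟨hz₂₃, by omega⟩⟩
  · -- `z` would be a second common up-neighbour of `w₁₂` and `w₁₃`, hence equal to `y₁`
    obtain rfl := hG.eq_of_downAdj_of_downAdj b e₁₂₁₃ h₁₂ h₁₃ hz ⟨hz₁₃.symm, by omega⟩
    exact absurd hz₂₃.symm n₁

theorem cubeMap_adj_cubeMap_iff (hG : IsMedianGraph G) (b : V)
    {x y₁ y₂ y₃ w₁₂ w₁₃ w₂₃ z : V}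
    (h₁ : G.DownAdj b x y₁) (h₂ : G.DownAdj b x y₂) (h₃ : G.DownAdj b x y₃)
    (h₁₂ : G.DownAdj b y₁ w₁₂) (h₁₃ : G.DownAdj b y₁ w₁₃) (h₂₁ : G.DownAdj b y₂ w₁₂)
    (h₂₃ : G.DownAdj b y₂ w₂₃) (h₃₁ : G.DownAdj b y₃ w₁₃) (h₃₂ : G.DownAdj b y₃ w₂₃)
    (hz₁₂ : G.DownAdj b w₁₂ z) (hz₁₃ : G.DownAdj b w₁₃ z) (hz₂₃ : G.DownAdj b w₂₃ z)
    (n₁ : ¬G.Adj y₁ w₂₃) (n₂ : ¬G.Adj y₂ w₁₃) (n₃ : ¬G.Adj y₃ w₁₂) :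
    ∀ a c, G.Adj (cubeMap x y₁ y₂ y₃ w₁₂ w₁₃ w₂₃ z a) (cubeMap x y₁ y₂ y₃ w₁₂ w₁₃ w₂₃ z c) ↔
      cubeGraph.Adj a c := by
  unfold DownAdj at *
  casesm* _ ∧ _
  simp only [Fin.forall_fin_succ_pi, Fin.forall_fin_zero_pi, Bool.forall_bool]
  and_intros
  -- each of the 64 pairs is an assumed edge, an assumed non-edge, or a non-edge forced by levels
  all_goals
    simp only [cubeMap, Fin.cons_zero, Fin.cons_one, Fin.cons_succ,
      ← Fin.succ_one_eq_two']
    first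
    | exact iff_of_true (by assumption) (by decide)
    | exact iff_of_true (G.adj_symm (by assumption)) (by decide)
    | exact iff_of_false (by assumption) (by decide)
    | exact iff_of_false (fun h => (by assumption : ¬ _) (G.adj_symm h)) (by decide)
    | exact iff_of_false (hG.not_adj_of_dist_ne_add_one b (by omega) (by omega)) (by decide)

theorem nonempty_cubeGraph_embedding (hG : IsMedianGraph G) (b : V) {x y₁ y₂ y₃ : V}
    (h₁₂ : y₁ ≠ y₂) (h₁₃ : y₁ ≠ y₃) (h₂₃ : y₂ ≠ y₃) (h₁ : G.DownAdj b x y₁)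
    (h₂ : G.DownAdj b x y₂) (h₃ : G.DownAdj b x y₃) : Nonempty (cubeGraph ↪g G) := by
  obtain ⟨w₁₂, hy₁w₁₂, hy₂w₁₂⟩ := hG.exists_downAdj_of_downAdj b h₁₂ h₁ h₂
  obtain ⟨w₁₃, hy₁w₁₃, hy₃w₁₃⟩ := hG.exists_downAdj_of_downAdj b h₁₃ h₁ h₃
  obtain ⟨w₂₃, hy₂w₂₃, hy₃w₂₃⟩ := hG.exists_downAdj_of_downAdj b h₂₃ h₂ h₃
  have below_all := hG.not_exists_downAdj_downAdj_downAdj b h₁₂ h₁₃ h₂₃ h₁ h₂ h₃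
  have e₁₂₁₃ : w₁₂ ≠ w₁₃ := by rintro rfl; exact below_all ⟨w₁₂, hy₁w₁₂, hy₂w₁₂, hy₃w₁₃⟩
  have e₁₂₂₃ : w₁₂ ≠ w₂₃ := by rintro rfl; exact below_all ⟨w₁₂, hy₁w₁₂, hy₂w₁₂, hy₃w₂₃⟩
  have e₁₃₂₃ : w₁₃ ≠ w₂₃ := by rintro rfl; exact below_all ⟨w₁₃, hy₁w₁₃, hy₂w₂₃, hy₃w₁₃⟩
  have := h₁.2
  have := h₂.2
  have := h₃.2
  have := hy₁w₁₂.2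
  have := hy₂w₂₃.2
  have := hy₃w₁₃.2
  have n₁ : ¬G.Adj y₁ w₂₃ := fun h => h₁₂ <|
    hG.eq_of_downAdj_of_downAdj b e₁₂₂₃ hy₁w₁₂ ⟨h, by omega⟩ hy₂w₁₂ hy₂w₂₃
  have n₂ : ¬G.Adj y₂ w₁₃ := fun h => h₁₂.symm <|
    hG.eq_of_downAdj_of_downAdj b e₁₂₁₃ hy₂w₁₂ ⟨h, by omega⟩ hy₁w₁₂ hy₁w₁₃
  have n₃ : ¬G.Adj y₃ w₁₂ := fun h => h₁₃.symm <|
    hG.eq_of_downAdj_of_downAdj b e₁₂₁₃ ⟨h, by omega⟩ hy₃w₁₃ hy₁w₁₂ hy₁w₁₃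
  obtain ⟨z, hw₁₂z, hw₁₃z, hw₂₃z⟩ := hG.exists_downAdj_downAdj_downAdj b e₁₂₁₃ e₁₂₂₃ e₁₃₂₃
    hy₁w₁₂ hy₁w₁₃ hy₂w₁₂ hy₂w₂₃ hy₃w₁₃ hy₃w₂₃ n₁
  exact ⟨cubeGraphEmbeddingOfAdjIff _ (hG.cubeMap_adj_cubeMap_iff b h₁ h₂ h₃ hy₁w₁₂ hy₁w₁₃
    hy₂w₁₂ hy₂w₂₃ hy₃w₁₃ hy₃w₂₃ hw₁₂z hw₁₃z hw₂₃z n₁ n₂ n₃)⟩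

end IsMedianGraph

/-- In a cube-free median graph `G`, for any base vertex `b`, every vertex `x`
has at most two neighbors `y` with `d(b, y) = d(b, x) − 1`. -/
theorem cubeFree_median_at_most_two_down_neighbors {V : Type}
    (G : SimpleGraph V) (hG : IsMedianGraph G) (hcf : CubeFree G) (b : V) :
    ∀ x y₁ y₂ y₃ : V,
      G.Adj x y₁ → G.Adj x y₂ → G.Adj x y₃ →
      G.dist b y₁ + 1 = G.dist b x → G.dist b y₂ + 1 = G.dist b x →
      G.dist b y₃ + 1 = G.dist b x →
      y₁ = y₂ ∨ y₁ = y₃ ∨ y₂ = y₃ := by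
  intro x y₁ y₂ y₃ hxy₁ hxy₂ hxy₃ hd₁ hd₂ hd₃
  by_contra! ⟨h₁₂, h₁₃, h₂₃⟩
  exact hcf.false (hG.nonempty_cubeGraph_embedding b h₁₂ h₁₃ h₂₃ ⟨hxy₁, hd₁⟩ ⟨hxy₂, hd₂⟩
    ⟨hxy₃, hd₃⟩).some
end

section
/- Let (X,d) be a complete metric space that is Menger-convex and in which any two distinct points are joined by a unique arc, in the sense that any two injective continuous paths in X with the same pair of endpoints have the same image. Then for any two distinct points x,y ∈ X, the image of the arc joining x and y equals the interval I(x,y) = {z ∈ X : d(x,z) + d(z,y) = d(x,y)}. -/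
/-!
A complete Menger-convex space is geodesic (Menger): by Zorn's lemma take a maximal closed set
`M ∋ a, b` on which `dist a` is an isometry onto a subset of `ℝ`. Completeness makes
`dist a '' M` closed, so a value in `[0, d(a, b)]` missing from it would lie in a gap
`(d(a, p₁), d(a, p₂))`; a Menger point between `p₁` and `p₂` could then be added to `M`.
Hence `dist a '' M ⊇ [0, d(a, b)]`, and `M` contains an arc from `a` to `b` inside `I(a, b)`.

By uniqueness of arcs, the arc `γ` from `x` to `y` is this geodesic, so it lies in `I(x, y)`.
Conversely, for `z ∈ I(x, y)` the geodesics from `x` to `z` and from `z` to `y` meet only at `z`,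
so their concatenation is an arc from `x` to `y`; it passes through `z`, and so does `γ`.
-/

open Set Function

def MengerConvex (X : Type*) [MetricSpace X] : Prop :=
  ∀ x y : X, x ≠ y → ∃ z : X, z ≠ x ∧ z ≠ y ∧ dist x z + dist z y = dist x y

section PseudoMetric

variable {X : Type*} [PseudoMetricSpace X]

def metricInterval (x y : X) : Set X := {z | dist x z + dist z y = dist x y}

lemma mem_metricInterval {x y z : X} : z ∈ metricInterval x y ↔ dist x z + dist z y = dist x y :=
  Iff.rfl

lemma mem_metricInterval_trans {a p q r : X} (hp : p ∈ metricInterval a q)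
    (hq : q ∈ metricInterval a r) : p ∈ metricInterval a r := by
  rw [mem_metricInterval] at *
  linarith [dist_triangle a p r, dist_triangle p q r]

lemma mem_metricInterval_split {a u v w : X} (hu : u ∈ metricInterval a v)
    (hw : w ∈ metricInterval u v) : u ∈ metricInterval a w ∧ w ∈ metricInterval a v := by
  simp only [mem_metricInterval] at *
  constructor <;> linarith [dist_triangle a w v, dist_triangle a u w]

lemma dist_eq_abs_sub_of_mem_metricInterval {a p q : X} (h : p ∈ metricInterval a q) :
    dist p q = |dist a p - dist a q| := by
  rw [mem_metricInterval] at h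
  rw [abs_of_nonpos (by linarith [dist_nonneg (x := p) (y := q)])]
  linarith

/-- `A` lies isometrically on a ray issuing from `a`. -/
def IsAlignedFrom (a : X) (A : Set X) : Prop :=
  ∀ p ∈ A, ∀ q ∈ A, dist p q = |dist a p - dist a q|

namespace IsAlignedFrom

variable {a : X} {A : Set X}

lemma mem_metricInterval (h : IsAlignedFrom a A) {p q : X} (hp : p ∈ A) (hq : q ∈ A)
    (hpq : dist a p ≤ dist a q) : p ∈ metricInterval a q := by
  rw [_root_.mem_metricInterval, h p hp q hq, abs_of_nonpos (by linarith)]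
  ring

protected lemma closure (h : IsAlignedFrom a A) : IsAlignedFrom a (closure A) := by
  have hprod : closure (A ×ˢ A) ⊆ {pq : X × X | dist pq.1 pq.2 = |dist a pq.1 - dist a pq.2|} :=
    closure_minimal (fun pq hpq => h _ hpq.1 _ hpq.2) (isClosed_eq (by fun_prop) (by fun_prop))
  rw [closure_prod_eq] at hprod
  exact fun p hp q hq => hprod (mk_mem_prod hp hq)

lemma sUnion {c : Set (Set X)} (hc : IsChain (· ⊆ ·) c) (h : ∀ A ∈ c, IsAlignedFrom a A) :
    IsAlignedFrom a (⋃₀ c) := by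
  rintro p ⟨A, hA, hp⟩ q ⟨B, hB, hq⟩
  rcases hc.total hA hB with hAB | hBA
  · exact h B hB p (hAB hp) q hq
  · exact h A hA p hp q (hBA hq)

lemma insert_of_mem_metricInterval (h : IsAlignedFrom a A) {w : X}
    (hw : ∀ q ∈ A, w ∈ metricInterval a q ∨ q ∈ metricInterval a w) :
    IsAlignedFrom a (insert w A) := by
  have hwq : ∀ q ∈ A, dist w q = |dist a w - dist a q| := fun q hq => by
    rcases hw q hq with hwq | hqw
    · exact dist_eq_abs_sub_of_mem_metricInterval hwq
    · rw [dist_comm, abs_sub_comm]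
      exact dist_eq_abs_sub_of_mem_metricInterval hqw
  rintro p (rfl | hp) q (rfl | hq)
  · simp
  · exact hwq q hq
  · rw [dist_comm, abs_sub_comm]
    exact hwq p hp
  · exact h p hp q hq

lemma insert_of_gap (h : IsAlignedFrom a A) {p₁ p₂ w : X} (hp₁ : p₁ ∈ A) (hp₂ : p₂ ∈ A)
    (hgap : ∀ q ∈ A, dist a q ≤ dist a p₁ ∨ dist a p₂ ≤ dist a q)
    (hp₁w : p₁ ∈ metricInterval a w) (hwp₂ : w ∈ metricInterval a p₂) :
    IsAlignedFrom a (insert w A) :=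
  h.insert_of_mem_metricInterval fun q hq => (hgap q hq).elim
    (fun hq₁ => Or.inr (mem_metricInterval_trans (h.mem_metricInterval hq hp₁ hq₁) hp₁w))
    (fun hq₂ => Or.inl (mem_metricInterval_trans hwp₂ (h.mem_metricInterval hp₂ hq hq₂)))

end IsAlignedFrom

end PseudoMetric

lemma IsClosed.exists_gap {α : Type*} [ConditionallyCompleteLinearOrder α] [TopologicalSpace α]
    [OrderTopology α] {T : Set α} (hT : IsClosed T) {s u t : α} (hs : s ∈ T) (hu : u ∈ T)
    (ht : t ∈ Icc s u) (htT : t ∉ T) :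
    ∃ t₁ ∈ T, ∃ t₂ ∈ T, t₁ < t ∧ t < t₂ ∧ ∀ r ∈ T, r ≤ t₁ ∨ t₂ ≤ r := by
  have hbdd₁ : BddAbove (T ∩ Iic t) := ⟨t, fun _ hr => hr.2⟩
  have hbdd₂ : BddBelow (T ∩ Ici t) := ⟨t, fun _ hr => hr.2⟩
  obtain ⟨ht₁T, ht₁t⟩ := (hT.inter isClosed_Iic).csSup_mem ⟨s, hs, ht.1⟩ hbdd₁
  obtain ⟨ht₂T, ht₂t⟩ := (hT.inter isClosed_Ici).csInf_mem ⟨u, hu, ht.2⟩ hbdd₂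
  refine ⟨_, ht₁T, _, ht₂T, lt_of_le_of_ne ht₁t (ne_of_mem_of_not_mem ht₁T htT),
    lt_of_le_of_ne ht₂t (ne_of_mem_of_not_mem ht₂T htT).symm, fun r hr => ?_⟩
  rcases le_total r t with hrt | htr
  · exact Or.inl (le_csSup hbdd₁ ⟨hr, hrt⟩)
  · exact Or.inr (csInf_le hbdd₂ ⟨hr, htr⟩)

lemma Path.injective_trans {X : Type*} [TopologicalSpace X] {x y z : X} {α : Path x y}
    {β : Path y z} (hα : Injective α) (hβ : Injective β) (h : range α ∩ range β ⊆ {y}) :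
    Injective (α.trans β) := by
  have hβ_eq_zero : ∀ s t, α s = β t → t = 0 := fun s t hst =>
    hβ (hst.symm.trans ((mem_singleton_iff.1 (h ⟨⟨s, rfl⟩, t, hst.symm⟩)).trans β.source.symm))
  intro u v huv
  rw [Path.trans_apply, Path.trans_apply] at huv
  split_ifs at huv with hu hv hv
  · have := congrArg Subtype.val (hα huv)
    exact Subtype.ext (by simp only at this; linarith)
  · have := congrArg Subtype.val (hβ_eq_zero _ _ huv)
    exact absurd (by simp only [Icc.coe_zero] at this; linarith) hv
  · have := congrArg Subtype.val (hβ_eq_zero _ _ huv.symm)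
    exact absurd (by simp only [Icc.coe_zero] at this; linarith) hu
  · have := congrArg Subtype.val (hβ huv)
    exact Subtype.ext (by simp only at this; linarith)

section Metric

variable {X : Type*} [MetricSpace X]

lemma metricInterval_inter_metricInterval_subset {x y z : X} (hz : z ∈ metricInterval x y) :
    metricInterval x z ∩ metricInterval z y ⊆ {z} := by
  rintro p ⟨hxz, hzy⟩
  rw [mem_metricInterval] at hz hxz hzy
  have : dist p z ≤ 0 := by linarith [dist_triangle x p y, dist_comm z p]
  exact dist_le_zero.1 this

namespace IsAlignedFrom

variable {a : X} {A : Set X}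

lemma isometry_domRestrict (h : IsAlignedFrom a A) : Isometry (A.domRestrict (dist a)) :=
  Isometry.of_dist_eq fun p q => by
    rw [Real.dist_eq, Subtype.dist_eq, h p p.2 q q.2]
    rfl

lemma isClosed_image [CompleteSpace X] (h : IsAlignedFrom a A) (hA : IsClosed A) :
    IsClosed (dist a '' A) := by
  have := hA.completeSpace_coe
  rw [← range_domRestrict]
  exact h.isometry_domRestrict.isClosedEmbedding.isClosed_range

lemma exists_injective_path {b : X} (h : IsAlignedFrom a A) (hb : b ∈ A) (hab : a ≠ b)
    (hsurj : Icc 0 (dist a b) ⊆ dist a '' A) :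
    ∃ γ : Path a b, Injective γ ∧ range γ ⊆ metricInterval a b := by
  set D := dist a b
  have hD : 0 < D := dist_pos.2 hab
  choose g hgA hgd using fun u : unitInterval =>
    hsurj ⟨mul_nonneg u.2.1 hD.le, mul_le_of_le_one_left hD.le u.2.2⟩
  have hg_dist : ∀ u v, dist (g u) (g v) = D * dist u v := fun u v => by
    rw [h _ (hgA u) _ (hgA v), hgd, hgd, ← sub_mul, abs_mul, abs_of_pos hD, mul_comm,
      Subtype.dist_eq, Real.dist_eq]
  have hg_cont : Continuous g :=
    (LipschitzWith.of_dist_le_mul (K := D.toNNReal) fun u v => by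
      rw [hg_dist, Real.coe_toNNReal _ hD.le]).continuous
  have hg₀ : g 0 = a := by
    rw [eq_comm, ← dist_eq_zero, hgd, Icc.coe_zero, zero_mul]
  have hg₁ : g 1 = b := by
    rw [← dist_eq_zero, h _ (hgA 1) _ hb, hgd, Icc.coe_one, one_mul, sub_self, abs_zero]
  refine ⟨⟨⟨g, hg_cont⟩, hg₀, hg₁⟩, fun u v huv => ?_, ?_⟩
  · have := hg_dist u v
    rw [show g u = g v from huv, dist_self, zero_eq_mul] at this
    exact dist_eq_zero.1 (this.resolve_left hD.ne')
  · rintro _ ⟨u, rfl⟩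
    exact h.mem_metricInterval (hgA u) hb ((hgd u).trans_le (mul_le_of_le_one_left hD.le u.2.2))

end IsAlignedFrom

theorem MengerConvex.exists_injective_path [CompleteSpace X] (hX : MengerConvex X) {a b : X}
    (hab : a ≠ b) : ∃ γ : Path a b, Injective γ ∧ range γ ⊆ metricInterval a b := by
  obtain ⟨M, -, ⟨hMc, haM, hbM, hM⟩, hmax⟩ := zorn_subset_nonempty
    {A : Set X | IsClosed A ∧ a ∈ A ∧ b ∈ A ∧ IsAlignedFrom a A}
    (fun c hcS hc ⟨A₀, hA₀⟩ =>
      ⟨closure (⋃₀ c),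
        ⟨isClosed_closure, subset_closure ⟨A₀, hA₀, (hcS hA₀).2.1⟩,
          subset_closure ⟨A₀, hA₀, (hcS hA₀).2.2.1⟩,
          (IsAlignedFrom.sUnion hc fun A hA => (hcS hA).2.2.2).closure⟩,
        fun A hA => (subset_sUnion_of_mem hA).trans subset_closure⟩)
    {a, b}
    ⟨(toFinite _).isClosed, by simp, by simp, by
      rintro p (rfl | rfl) q (rfl | rfl) <;> simp [dist_comm]⟩
  refine hM.exists_injective_path hbM hab fun t ht => by_contra fun htM => ?_
  obtain ⟨_, ⟨p₁, hp₁, rfl⟩, _, ⟨p₂, hp₂, rfl⟩, ht₁, ht₂, hgap⟩ :=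
    (hM.isClosed_image hMc).exists_gap ⟨a, haM, dist_self a⟩ ⟨b, hbM, rfl⟩ ht htM
  have hgap' : ∀ q ∈ M, dist a q ≤ dist a p₁ ∨ dist a p₂ ≤ dist a q :=
    fun q hq => hgap _ ⟨q, hq, rfl⟩
  obtain ⟨w, hwp₁, hwp₂, hw⟩ := hX p₁ p₂ (by rintro rfl; linarith)
  obtain ⟨hp₁w, hwp₂'⟩ :=
    mem_metricInterval_split (hM.mem_metricInterval hp₁ hp₂ (by linarith)) hw
  have hwM : w ∉ M := fun hwM => by
    rw [mem_metricInterval] at hp₁w hwp₂'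
    rcases hgap' w hwM with h | h
    · linarith [dist_pos.2 hwp₁.symm]
    · linarith [dist_pos.2 hwp₂]
  exact hwM <| hmax ⟨isClosed_singleton.union hMc, mem_insert_of_mem _ haM,
    mem_insert_of_mem _ hbM, hM.insert_of_gap hp₁ hp₂ hgap' hp₁w hwp₂'⟩
    (subset_insert w M) (mem_insert w M)

end Metric

theorem arc_eq_interval_general {X : Type} [MetricSpace X] [CompleteSpace X]
    (hMenger : ∀ x y : X, x ≠ y →
      ∃ z : X, z ≠ x ∧ z ≠ y ∧ dist x z + dist z y = dist x y)
    (hunique : ∀ (x y : X) (γ₁ γ₂ : Path x y), Function.Injective ⇑γ₁ →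
      Function.Injective ⇑γ₂ → Set.range ⇑γ₁ = Set.range ⇑γ₂)
    (x y : X) (hxy : x ≠ y) (γ : Path x y) (hγ : Function.Injective ⇑γ) :
    Set.range ⇑γ = {z : X | dist x z + dist z y = dist x y} := by
  obtain ⟨δ, hδ, hδI⟩ := MengerConvex.exists_injective_path hMenger hxy
  refine Subset.antisymm ((hunique x y γ δ hγ hδ).trans_subset hδI) fun z hz => ?_
  rcases eq_or_ne z x with rfl | hzx
  · exact ⟨0, γ.source⟩
  rcases eq_or_ne z y with rfl | hzy
  · exact ⟨1, γ.target⟩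
  obtain ⟨α, hα, hαI⟩ := MengerConvex.exists_injective_path hMenger hzx.symm
  obtain ⟨β, hβ, hβI⟩ := MengerConvex.exists_injective_path hMenger hzy
  have hαβ : Injective (α.trans β) := Path.injective_trans hα hβ
    ((inter_subset_inter hαI hβI).trans (metricInterval_inter_metricInterval_subset hz))
  rw [hunique x y γ _ hγ hαβ, Path.trans_range]
  exact Or.inl ⟨1, α.target⟩

/-- Let `(X, d)` be a complete Menger-convex metric space in which any two
distinct points are joined by a unique arc (any two injective paths with the
same endpoints have the same image, and such a path exists). Then for any two
distinct points `x, y`, the image of the arc joining them equals the metric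
interval `I(x, y) = {z | d(x, z) + d(z, y) = d(x, y)}`. -/
theorem arc_eq_interval {X : Type} [MetricSpace X] [CompleteSpace X]
    (hMenger : ∀ x y : X, x ≠ y →
      ∃ z : X, z ≠ x ∧ z ≠ y ∧ dist x z + dist z y = dist x y)
    (hexists : ∀ x y : X, x ≠ y → ∃ γ : Path x y, Function.Injective ⇑γ)
    (hunique : ∀ (x y : X) (γ₁ γ₂ : Path x y), Function.Injective ⇑γ₁ →
      Function.Injective ⇑γ₂ → Set.range ⇑γ₁ = Set.range ⇑γ₂)
    (x y : X) (hxy : x ≠ y) (γ : Path x y) (hγ : Function.Injective ⇑γ) :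
    Set.range ⇑γ = {z : X | dist x z + dist z y = dist x y} :=
  arc_eq_interval_general hMenger hunique x y hxy γ hγ
end
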